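/- arXiv:2507.03193 — 8 statements merged into one kernel-verified Lean document; each statement's English description precedes it below -/
import Mathlib

section
/- For every Abelian group G and non-negative integers d, k, n with n ≥ 1 and d ≤ k ≤ n − d, the following holds: every degree-d polynomial P : {0,1}^n_k → G that is not identically zero on {0,1}^n_k satisfies Pr_{x uniform on {0,1}^n_k}[P(x) ≠ 0] ≥ C(n−2d, k−d) / C(n, k), where C(a,b) denotes the binomial coefficient. -/
/-!
Induction on `d`. For `i ≠ j` outside `B`, the exchange difference `B ↦ P (B + i) - P (B + j)` is a
polynomial of degree `d - 1` on the slice of `(k - 1)`-subsets of the other `n - 2` coordinates, and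
sending `B` to whichever of `B + i`, `B + j` is a nonzero of `P` injects its nonzeros into those of
`P`; induction gives `C(n - 2d, k - d)`. If all exchange differences vanish, `P` is constant on the
slice, since any two `k`-sets are joined by exchanges, and then `C(n - 2d, k - d) ≤ C(n, k)`.
-/

open Finset

section MultilinearEval

variable {α G : Type*} [DecidableEq α] [AddCommGroup G]

/-- The multilinear polynomial `∑_{#S ≤ d} a S • ∏_{i ∈ S} x i` evaluated at the indicator vector
of `A`. -/
def multilinearEval (d : ℕ) (a : Finset α → G) (A : Finset α) : G :=
  ∑ S ∈ A.powerset with #S ≤ d, a S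

lemma sum_prod_ite_mem_smul_eq_multilinearEval [Fintype α] (d : ℕ) (a : Finset α → G)
    (A : Finset α) :
    ∑ S ∈ univ.filter (fun S : Finset α ↦ #S ≤ d),
      (∏ i ∈ S, if i ∈ A then (1 : ℤ) else 0) • a S = multilinearEval d a A := by
  simp only [prod_boole, ite_smul, one_smul, zero_smul, multilinearEval, sum_ite, sum_const_zero,
    add_zero, filter_filter]
  refine sum_congr (ext fun S ↦ ?_) fun _ _ ↦ rfl
  simp only [mem_filter, mem_univ, true_and, mem_powerset]
  exact ⟨fun h ↦ ⟨fun i hi ↦ h.2 i hi, h.1⟩, fun h ↦ ⟨h.2, fun i hi ↦ h.1 hi⟩⟩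

lemma multilinearEval_zero (a : Finset α → G) (A : Finset α) :
    multilinearEval 0 a A = a ∅ := by
  simp [multilinearEval, filter_eq']

lemma multilinearEval_succ_insert (d : ℕ) (a : Finset α → G) {i : α} {B : Finset α}
    (hi : i ∉ B) :
    multilinearEval (d + 1) a (insert i B) =
      multilinearEval (d + 1) a B + multilinearEval d (fun S ↦ a (insert i S)) B := by
  simp only [multilinearEval, sum_filter, sum_powerset_insert hi]
  congr 1
  refine sum_congr rfl fun S hS ↦ ?_
  simp only [card_insert_of_notMem fun h ↦ hi (mem_powerset.1 hS h), Nat.add_le_add_iff_right]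

lemma multilinearEval_insert_sub_insert (d : ℕ) (a : Finset α → G) {i j : α} {B : Finset α}
    (hi : i ∉ B) (hj : j ∉ B) :
    multilinearEval (d + 1) a (insert i B) - multilinearEval (d + 1) a (insert j B) =
      multilinearEval d (fun S ↦ a (insert i S) - a (insert j S)) B := by
  rw [multilinearEval_succ_insert d a hi, multilinearEval_succ_insert d a hj]
  simp only [multilinearEval, sum_sub_distrib]
  abel

end MultilinearEval

section Exchange

variable {α : Type*} [DecidableEq α]

lemma mem_powersetCard_sdiff_pair {V B : Finset α} {i j : α} {k : ℕ} :
    B ∈ (V \ {i, j}).powersetCard k ↔ B ⊆ V ∧ i ∉ B ∧ j ∉ B ∧ #B = k := by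
  simp [mem_powersetCard, subset_sdiff, and_assoc]

lemma card_filter_insert_sub_insert_ne_zero_le {G : Type*} [AddGroup G] [DecidableEq G]
    (f : Finset α → G) {V : Finset α} {i j : α} (hi : i ∈ V) (hj : j ∈ V) (k : ℕ) :
    #{B ∈ (V \ {i, j}).powersetCard k | f (insert i B) - f (insert j B) ≠ 0} ≤
      #{A ∈ V.powersetCard (k + 1) | f A ≠ 0} := by
  let pick (B : Finset α) : Finset α := if f (insert i B) ≠ 0 then insert i B else insert j B
  refine card_le_card_of_injOn pick (fun B hB ↦ ?_) fun B₁ hB₁ B₂ hB₂ h ↦ ?_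
  · obtain ⟨hB, hne⟩ := mem_filter.1 hB
    obtain ⟨hBV, hiB, hjB, hBk⟩ := mem_powersetCard_sdiff_pair.1 hB
    rw [mem_coe, mem_filter, mem_powersetCard]
    simp only [pick]
    split_ifs with hfi
    · exact ⟨⟨insert_subset hi hBV, by rw [card_insert_of_notMem hiB, hBk]⟩, hfi⟩
    · refine ⟨⟨insert_subset hj hBV, by rw [card_insert_of_notMem hjB, hBk]⟩, fun hfj ↦ hne ?_⟩
      rw [not_not.1 hfi, hfj, sub_zero]
  · have hpick : ∀ B ∈ (V \ {i, j}).powersetCard k, pick B \ {i, j} = B := by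
      intro B hB
      obtain ⟨-, hiB, hjB, -⟩ := mem_powersetCard_sdiff_pair.1 hB
      simp only [pick]
      split_ifs <;>
        rw [insert_sdiff_of_mem _ (by simp), sdiff_eq_self_of_disjoint (by simp [hiB, hjB])]
    rw [← hpick B₁ (mem_filter.1 hB₁).1, ← hpick B₂ (mem_filter.1 hB₂).1, h]

lemma eq_of_mem_powersetCard_of_insert_eq {β : Type*} (f : Finset α → β) {V : Finset α} {k : ℕ}
    (hswap : ∀ i ∈ V, ∀ j ∈ V, ∀ B ∈ (V \ {i, j}).powersetCard k,
      f (insert i B) = f (insert j B))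
    {A A' : Finset α} (hA : A ∈ V.powersetCard (k + 1)) (hA' : A' ∈ V.powersetCard (k + 1)) :
    f A = f A' := by
  obtain ⟨hA'V, hA'k⟩ := mem_powersetCard.1 hA'
  induction hm : #(A \ A') using Nat.strong_induction_on generalizing A with
  | _ m ih =>
    obtain ⟨hAV, hAk⟩ := mem_powersetCard.1 hA
    obtain hAA' | ⟨i, hi⟩ := (A \ A').eq_empty_or_nonempty
    · rw [eq_of_subset_of_card_le (sdiff_eq_empty_iff_subset.1 hAA') (by omega)]
    obtain ⟨j, hj⟩ : (A' \ A).Nonempty := by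
      rw [← card_pos, ← card_sdiff_comm (hAk.trans hA'k.symm), card_pos]
      exact ⟨i, hi⟩
    rw [mem_sdiff] at hi hj
    have hjA : j ∉ A.erase i := fun h ↦ hj.2 (mem_of_mem_erase h)
    have hB : A.erase i ∈ (V \ {i, j}).powersetCard k := by
      refine mem_powersetCard_sdiff_pair.2 ⟨(erase_subset i A).trans hAV, notMem_erase i A, hjA, ?_⟩
      rw [card_erase_of_mem hi.1, hAk, Nat.add_sub_cancel]
    have hAj : insert j (A.erase i) ∈ V.powersetCard (k + 1) := by
      refine mem_powersetCard.2 ⟨insert_subset (hA'V hj.1) ((erase_subset i A).trans hAV), ?_⟩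
      rw [card_insert_of_notMem hjA, card_erase_of_mem hi.1, hAk, Nat.add_sub_cancel]
    have hsmaller : #(insert j (A.erase i) \ A') < m := by
      rw [insert_sdiff_of_mem _ hj.1, erase_sdiff_comm, card_erase_of_mem (mem_sdiff.2 hi), ← hm]
      exact Nat.sub_one_lt_of_lt (card_pos.2 ⟨i, mem_sdiff.2 hi⟩)
    rw [← insert_erase hi.1, hswap i (hAV hi.1) j (hA'V hj.1) _ hB]
    exact ih _ hsmaller hAj rfl

end Exchange

lemma Nat.choose_sub_two_mul_le_choose {m j : ℕ} (e : ℕ) (h : j ≤ m) :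
    (m - 2 * e).choose (j - e) ≤ m.choose j := by
  induction e generalizing m j with
  | zero => simp
  | succ e ih =>
    obtain _ | j := j
    · simp
    obtain _ | m := m
    · omega
    calc (m + 1 - 2 * (e + 1)).choose (j + 1 - (e + 1))
        ≤ (m - 2 * e).choose (j - e) := by
          rw [Nat.add_sub_add_right]
          exact Nat.choose_le_choose _ (by omega)
      _ ≤ m.choose j := ih (by omega)
      _ ≤ (m + 1).choose (j + 1) := by rw [Nat.choose_succ_succ]; omega

theorem choose_le_card_multilinearEval_ne_zero {α G : Type*} [DecidableEq α] [AddCommGroup G]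
    [DecidableEq G] (d : ℕ) (a : Finset α → G) (V : Finset α) (k : ℕ)
    (h : ∃ A ∈ V.powersetCard k, multilinearEval d a A ≠ 0) :
    (#V - 2 * d).choose (k - d) ≤ #{A ∈ V.powersetCard k | multilinearEval d a A ≠ 0} := by
  induction d generalizing a V k with
  | zero =>
    obtain ⟨A₀, -, hA₀⟩ := h
    rw [filter_true_of_mem fun A _ ↦ by rwa [multilinearEval_zero, ← multilinearEval_zero a A₀],
      card_powersetCard]
    simp
  | succ d ih =>
    obtain _ | k := k
    · simpa [card_pos, filter_nonempty_iff] using h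
    by_cases hexch : ∃ i ∈ V, ∃ j ∈ V, ∃ B ∈ (V \ {i, j}).powersetCard k,
        multilinearEval (d + 1) a (insert i B) ≠ multilinearEval (d + 1) a (insert j B)
    · obtain ⟨i, hi, j, hj, B, hB, hne⟩ := hexch
      have hij : i ≠ j := by rintro rfl; exact hne rfl
      have hcard : #(V \ {i, j}) = #V - 2 := by
        rw [card_sdiff_of_subset (insert_subset hi (singleton_subset_iff.2 hj)), card_pair hij]
      have hderiv {B} (hB : B ∈ (V \ {i, j}).powersetCard k) :
          multilinearEval (d + 1) a (insert i B) - multilinearEval (d + 1) a (insert j B) =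
            multilinearEval d (fun S ↦ a (insert i S) - a (insert j S)) B := by
        obtain ⟨-, hiB, hjB, -⟩ := mem_powersetCard_sdiff_pair.1 hB
        exact multilinearEval_insert_sub_insert d a hiB hjB
      calc (#V - 2 * (d + 1)).choose (k + 1 - (d + 1))
          = (#(V \ {i, j}) - 2 * d).choose (k - d) := by rw [hcard]; congr 1 <;> omega
        _ ≤ #{B ∈ (V \ {i, j}).powersetCard k |
              multilinearEval d (fun S ↦ a (insert i S) - a (insert j S)) B ≠ 0} :=
          ih _ _ _ ⟨B, hB, hderiv hB ▸ sub_ne_zero.2 hne⟩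
        _ = #{B ∈ (V \ {i, j}).powersetCard k | multilinearEval (d + 1) a (insert i B) -
              multilinearEval (d + 1) a (insert j B) ≠ 0} := by
          rw [filter_congr fun B hB ↦ by rw [← hderiv hB]]
        _ ≤ _ := card_filter_insert_sub_insert_ne_zero_le _ hi hj k
    · push Not at hexch
      obtain ⟨A₀, hA₀, hA₀ne⟩ := h
      rw [filter_true_of_mem fun A hA ↦ by
          rwa [eq_of_mem_powersetCard_of_insert_eq _ hexch hA hA₀], card_powersetCard]
      obtain ⟨hA₀V, hA₀k⟩ := mem_powersetCard.1 hA₀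
      exact Nat.choose_sub_two_mul_le_choose _ (hA₀k ▸ card_le_card hA₀V)

theorem suboptimal_distance_lemma_slices_general
    (G : Type) [AddCommGroup G] (d n k : ℕ)
    (P : Finset (Fin n) → G)
    (hP : ∃ a : Finset (Fin n) → G, ∀ A : Finset (Fin n), A.card = k →
      P A = ∑ S ∈ Finset.univ.filter (fun S : Finset (Fin n) => S.card ≤ d),
        (∏ i ∈ S, if i ∈ A then (1 : ℤ) else 0) • a S)
    (hnz : ∃ A : Finset (Fin n), A.card = k ∧ P A ≠ 0) :
    ((n - 2 * d).choose (k - d) : ℝ) / (n.choose k : ℝ) ≤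
      (Nat.card {A : Finset (Fin n) // A.card = k ∧ P A ≠ 0} : ℝ) /
        (n.choose k : ℝ) := by
  classical
  obtain ⟨a, ha⟩ := hP
  simp only [sum_prod_ite_mem_smul_eq_multilinearEval] at ha
  have hslice : {A ∈ (univ : Finset (Fin n)).powersetCard k | P A ≠ 0} =
      {A ∈ (univ : Finset (Fin n)).powersetCard k | multilinearEval d a A ≠ 0} :=
    filter_congr fun A hA ↦ by rw [ha A (mem_powersetCard_univ.1 hA)]
  have hcount := choose_le_card_multilinearEval_ne_zero d a univ k <| by
    obtain ⟨A, hA, hPA⟩ := hnz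
    exact ⟨A, mem_powersetCard_univ.2 hA, ha A hA ▸ hPA⟩
  rw [card_univ, Fintype.card_fin, ← hslice] at hcount
  have hcard : Nat.card {A : Finset (Fin n) // A.card = k ∧ P A ≠ 0} =
      #{A ∈ (univ : Finset (Fin n)).powersetCard k | P A ≠ 0} := by
    rw [Nat.card_eq_fintype_card, Fintype.card_subtype]
    congr 1
    ext A
    simp
  rw [hcard]
  gcongr

theorem suboptimal_distance_lemma_slices
    (G : Type) [AddCommGroup G] (d n k : ℕ)
    (hn : 1 ≤ n) (hdk : d ≤ k) (hkn : k ≤ n - d)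
    (P : Finset (Fin n) → G)
    (hP : ∃ a : Finset (Fin n) → G, ∀ A : Finset (Fin n), A.card = k →
      P A = ∑ S ∈ Finset.univ.filter (fun S : Finset (Fin n) => S.card ≤ d),
        (∏ i ∈ S, if i ∈ A then (1 : ℤ) else 0) • a S)
    (hnz : ∃ A : Finset (Fin n), A.card = k ∧ P A ≠ 0) :
    ((n - 2 * d).choose (k - d) : ℝ) / (n.choose k : ℝ) ≤
      (Nat.card {A : Finset (Fin n) // A.card = k ∧ P A ≠ 0} : ℝ) /
        (n.choose k : ℝ) :=
  suboptimal_distance_lemma_slices_general G d n k P hP hnz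
end

section
/- Let F be any field, let n and k be natural numbers with k ∈ [n], and fix an arbitrary point a ∈ {0,1}^n_k. Then the minimum number m of hyperplanes H_1, …, H_m over F (each H_i being the zero set in F^n of a polynomial of degree exactly 1) such that the union H_1 ∪ ⋯ ∪ H_m intersects {0,1}^n_k exactly in the set {0,1}^n_k \ {a} is equal to min{k, n−k}. -/
/-!
A point `A ≠ a` of the slice must leave `a` somewhere and enter its complement somewhere, so the
coordinate hyperplanes `x_j = 0` for `j ∈ a`, or `x_j = 1` for `j ∉ a`, form an exact cover.

Conversely, fix `t = min k (n - k)` disjoint swaps, each exchanging a coordinate in `a` with one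
outside `a`. Performing the swaps of a set `S ⊆ Fin t` gives a copy of the cube `{0,1}^t` inside
the slice, with `S = ∅` giving `a`, and on it every affine form is affine in the indicator of `S`.
The product of the `m` forms of a cover vanishes on this cube exactly off `S = ∅`, so its
alternating sum over the cube is nonzero; but that sum vanishes when `m < t`.
-/

open Finset

theorem Finset.sum_neg_one_pow_card_mul_boole_subset {ι R : Type*} [Fintype ι] [DecidableEq ι]
    [CommRing R] {T : Finset ι} (hT : T ≠ univ) :
    ∑ S : Finset ι, (-1 : R) ^ #S * (if T ⊆ S then 1 else 0) = 0 := by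
  obtain ⟨x, hxT⟩ : ∃ x, x ∉ T := by simpa [eq_univ_iff_forall] using hT
  rw [← powerset_univ, ← insert_erase (mem_univ x), sum_powerset_insert (notMem_erase x _),
    ← sum_add_distrib]
  refine sum_eq_zero fun S hS => ?_
  have hxS : x ∉ S := fun h => notMem_erase x _ (mem_powerset.1 hS h)
  simp only [card_insert_of_notMem hxS, subset_insert_iff_of_notMem hxT, pow_succ]
  ring

theorem Finset.sum_neg_one_pow_card_mul_prod_affine_eq_zero {ι κ R : Type*} [Fintype ι]
    [Fintype κ] [CommRing R] (hκι : Fintype.card κ < Fintype.card ι) (d : κ → R)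
    (e : κ → ι → R) :
    ∑ S : Finset ι, (-1 : R) ^ #S * ∏ i, (d i + ∑ s ∈ S, e i s) = 0 := by
  classical
  -- Expanding the product, each term depends on `S` only through whether `S` contains its
  -- support, which has at most `card κ < card ι` elements.
  let w (i : κ) (o : Option ι) : R := o.elim (d i) (e i)
  let support (f : κ → Option ι) : Finset ι := univ.biUnion fun i => (f i).toFinset
  have expand (S : Finset ι) : ∏ i, (d i + ∑ s ∈ S, e i s) =
      ∑ f : κ → Option ι, if support f ⊆ S then ∏ i, w i (f i) else 0 := by
    have factor (i : κ) : d i + ∑ s ∈ S, e i s = ∑ o ∈ insertNone S, w i o := by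
      simp [w, sum_insertNone]
    simp_rw [factor, prod_univ_sum, ← sum_filter]
    congr 1
    ext f
    simp [support, Fintype.mem_piFinset, mem_insertNone, subset_iff, forall_comm (α := ι)]
  have support_ne_univ (f : κ → Option ι) : support f ≠ univ := by
    refine ne_of_apply_ne card (ne_of_lt ?_)
    calc #(support f) ≤ ∑ i, #(f i).toFinset := card_biUnion_le
      _ ≤ ∑ _i : κ, 1 := sum_le_sum fun i _ => by cases f i <;> simp
      _ < #(univ : Finset ι) := by simpa using hκι
  simp_rw [expand, mul_sum]
  rw [sum_comm]
  refine sum_eq_zero fun f _ => ?_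
  calc ∑ S : Finset ι, (-1 : R) ^ #S * (if support f ⊆ S then ∏ i, w i (f i) else 0)
      = (∏ i, w i (f i)) * ∑ S : Finset ι, (-1 : R) ^ #S * (if support f ⊆ S then 1 else 0) := by
        rw [mul_sum]
        refine sum_congr rfl fun S _ => ?_
        split_ifs <;> ring
    _ = 0 := by rw [sum_neg_one_pow_card_mul_boole_subset (support_ne_univ f), mul_zero]

theorem Finset.card_le_card_of_prod_affine_eq_zero_of_nonempty {ι κ R : Type*} [Fintype ι]
    [Fintype κ] [CommRing R] {d : κ → R} {e : κ → ι → R}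
    (hzero : ∀ S : Finset ι, S.Nonempty → ∏ i, (d i + ∑ s ∈ S, e i s) = 0)
    (hne : ∏ i, d i ≠ 0) : Fintype.card ι ≤ Fintype.card κ := by
  by_contra! hκι
  refine hne ?_
  have := sum_neg_one_pow_card_mul_prod_affine_eq_zero hκι d e
  rw [sum_eq_single_of_mem ∅ (mem_univ _) fun S _ hS => by
    rw [hzero S (nonempty_iff_ne_empty.2 hS), mul_zero], card_empty, pow_zero, one_mul] at this
  simpa using this

theorem Finset.ne_iff_exists_mem_notMem_of_card_eq {σ : Type*} {A a : Finset σ} (h : #A = #a) :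
    A ≠ a ↔ ∃ j ∈ a, j ∉ A := by
  rw [← not_subset, not_iff_not]
  exact ⟨fun hAa => hAa ▸ subset_rfl, fun haA => (eq_of_subset_of_card_le haA h.le).symm⟩

theorem Finset.exists_embedding_fin_forall_mem {σ : Type*} (s : Finset σ) {t : ℕ} (ht : t ≤ #s) :
    ∃ u : Fin t ↪ σ, ∀ i, u i ∈ s :=
  ⟨(Fin.castLEEmb ht).trans (s.equivFin.symm.toEmbedding.trans (.subtype _)),
    fun _ => (s.equivFin.symm _).2⟩

section Exchange

variable {σ ι : Type*} {a : Finset σ} {u v : ι ↪ σ}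

theorem Finset.map_subset_of_forall_mem (hu : ∀ s, u s ∈ a) (S : Finset ι) : S.map u ⊆ a := by
  simp [subset_iff, hu]

variable [DecidableEq σ]

def Finset.exchange (a : Finset σ) (u v : ι ↪ σ) (S : Finset ι) : Finset σ :=
  a \ S.map u ∪ S.map v

@[simp]
theorem Finset.exchange_empty : a.exchange u v ∅ = a := by
  simp [exchange]

theorem Finset.disjoint_sdiff_map (hv : ∀ s, v s ∉ a) (b : Finset σ) (S : Finset ι) :
    Disjoint (a \ b) (S.map v) := by
  rw [disjoint_left]
  intro x hx hxv
  obtain ⟨s, -, rfl⟩ := mem_map.1 hxv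
  exact hv s (mem_sdiff.1 hx).1

theorem Finset.card_exchange (hu : ∀ s, u s ∈ a) (hv : ∀ s, v s ∉ a) (S : Finset ι) :
    #(a.exchange u v S) = #a := by
  have hS : #S ≤ #a := by simpa using card_le_card (map_subset_of_forall_mem hu S)
  rw [exchange, card_union_of_disjoint (disjoint_sdiff_map hv _ S),
    card_sdiff_of_subset (map_subset_of_forall_mem hu S), card_map, card_map]
  omega

theorem Finset.exchange_ne (hv : ∀ s, v s ∉ a) {S : Finset ι} (hS : S.Nonempty) :
    a.exchange u v S ≠ a := by
  obtain ⟨s, hs⟩ := hS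
  intro h
  exact hv s (h ▸ mem_union_right _ (mem_map_of_mem v hs))

theorem Finset.sum_exchange {M : Type*} [AddCommGroup M] (hu : ∀ s, u s ∈ a)
    (hv : ∀ s, v s ∉ a) (c : σ → M) (S : Finset ι) :
    ∑ j ∈ a.exchange u v S, c j = ∑ j ∈ a, c j + ∑ s ∈ S, (c (v s) - c (u s)) := by
  rw [exchange, sum_union (disjoint_sdiff_map hv _ S),
    sum_sdiff_eq_sub (map_subset_of_forall_mem hu S), sum_map, sum_map, sum_sub_distrib]
  abel

end Exchange

theorem Finset.sum_mul_boole_mem {σ M : Type*} [Fintype σ] [DecidableEq σ]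
    [NonAssocSemiring M] (c : σ → M) (A : Finset σ) :
    ∑ j, c j * (if j ∈ A then 1 else 0) = ∑ j ∈ A, c j := by
  simp only [mul_boole, sum_ite_mem, univ_inter]

section SliceCover

variable {F σ : Type*} [CommRing F] [Fintype σ] [DecidableEq σ]

def IsExactSliceCover {m : ℕ} (c0 : Fin m → F) (c : Fin m → σ → F) (k : ℕ) (a : Finset σ) :
    Prop :=
  (∀ i, c i ≠ 0) ∧ ∀ A : Finset σ, #A = k →
    ((∃ i, c0 i + ∑ j, c i j * (if j ∈ A then (1 : F) else 0) = 0) ↔ A ≠ a)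

theorem exists_isExactSliceCover_of_separating [Nontrivial F] {a : Finset σ} (P : Finset σ)
    (hP : ∀ A : Finset σ, #A = #a → (A ≠ a ↔ ∃ j ∈ P, (j ∈ A ↔ j ∉ a))) :
    ∃ (c0 : Fin #P → F) (c : Fin #P → σ → F), IsExactSliceCover c0 c #a a := by
  let e := P.equivFin.symm
  refine ⟨fun i => -(if (e i : σ) ∈ a then 0 else 1), fun i => Pi.single (e i) 1, ?_, ?_⟩
  · intro i hi
    simpa using congrFun hi (e i)
  · intro A hA
    simp only [sum_mul_boole_mem, sum_pi_single']
    rw [hP A hA]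
    refine (e.exists_congr (q := fun j : P => ((j : σ) ∈ A ↔ (j : σ) ∉ a)) fun i => ?_).trans
      (by simp)
    by_cases hA : (e i : σ) ∈ A <;> by_cases ha : (e i : σ) ∈ a <;> simp [hA, ha]

theorem IsExactSliceCover.min_le [IsDomain F] {m : ℕ} {c0 : Fin m → F} {c : Fin m → σ → F}
    {a : Finset σ}
    (hc : IsExactSliceCover c0 c #a a) : min #a (Fintype.card σ - #a) ≤ m := by
  set t : ℕ := min #a (Fintype.card σ - #a)
  obtain ⟨u, hu⟩ := a.exists_embedding_fin_forall_mem (t := t) (min_le_left _ _)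
  obtain ⟨v, hv⟩ := aᶜ.exists_embedding_fin_forall_mem (t := t)
    (by rw [card_compl]; exact min_le_right _ _)
  simp only [mem_compl] at hv
  let D (i : Fin m) : F := c0 i + ∑ j ∈ a, c i j
  let E (i : Fin m) (s : Fin t) : F := c i (v s) - c i (u s)
  have eval (i : Fin m) (S : Finset (Fin t)) :
      c0 i + ∑ j, c i j * (if j ∈ a.exchange u v S then (1 : F) else 0) =
        D i + ∑ s ∈ S, E i s := by
    rw [sum_mul_boole_mem, sum_exchange hu hv, add_assoc]
  have vanish (S : Finset (Fin t)) (hS : S.Nonempty) : ∏ i, (D i + ∑ s ∈ S, E i s) = 0 := by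
    obtain ⟨i, hi⟩ := (hc.2 _ (card_exchange hu hv S)).2 (exchange_ne hv hS)
    exact prod_eq_zero (mem_univ i) ((eval i S).symm.trans hi)
  have nonvanish : ∏ i, D i ≠ 0 := prod_ne_zero_iff.2 fun i _ hi =>
    (hc.2 a rfl).1 ⟨i, by rwa [sum_mul_boole_mem]⟩ rfl
  simpa using card_le_card_of_prod_affine_eq_zero_of_nonempty vanish nonvanish

end SliceCover

theorem exact_hyperplane_cover_slice_general
    (F : Type) [Field F] (n k : ℕ)
    (a : Finset (Fin n)) (ha : a.card = k) :
    IsLeast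
      {m : ℕ | ∃ (c0 : Fin m → F) (c : Fin m → Fin n → F),
        (∀ i : Fin m, c i ≠ 0) ∧
        ∀ A : Finset (Fin n), A.card = k →
          ((∃ i : Fin m,
              c0 i + ∑ j : Fin n, c i j * (if j ∈ A then (1 : F) else 0) = 0) ↔
            A ≠ a)}
      (min k (n - k)) := by
  subst ha
  refine ⟨?_, fun m ⟨c0, c, hc⟩ => by simpa using IsExactSliceCover.min_le (c0 := c0) hc⟩
  rcases le_total #a (n - #a) with hle | hle
  · rw [min_eq_left hle]
    exact exists_isExactSliceCover_of_separating a fun A hA =>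
      (ne_iff_exists_mem_notMem_of_card_eq hA).trans <| exists_congr fun j => by tauto
  · rw [min_eq_right hle, show n - #a = #aᶜ by simp [card_compl]]
    exact exists_isExactSliceCover_of_separating aᶜ fun A hA =>
      ne_comm.trans <| (ne_iff_exists_mem_notMem_of_card_eq hA.symm).trans <|
        exists_congr fun j => by rw [mem_compl]; tauto

theorem exact_hyperplane_cover_slice
    (F : Type) [Field F] (n k : ℕ) (hk1 : 1 ≤ k) (hkn : k ≤ n)
    (a : Finset (Fin n)) (ha : a.card = k) :
    IsLeast
      {m : ℕ | ∃ (c0 : Fin m → F) (c : Fin m → Fin n → F),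
        (∀ i : Fin m, c i ≠ 0) ∧
        ∀ A : Finset (Fin n), A.card = k →
          ((∃ i : Fin m,
              c0 i + ∑ j : Fin n, c i j * (if j ∈ A then (1 : F) else 0) = 0) ↔
            A ≠ a)}
      (min k (n - k)) :=
  exact_hyperplane_cover_slice_general F n k a ha
end

section
/- Let n be an even natural number and d a natural number. Let P : {0,1}^n_{n/2} → ℝ be a degree-d polynomial on the balanced slice that is not identically zero, and let S ⊆ {0,1}^n_{n/2} be the set of points where P is non-zero. Then (1 / C(n, n/2)) · Σ_{x ∈ S} Σ_{y ∈ S} W[x, y] ≥ (|S| / C(n, n/2)) · (1/2^d). -/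
/-!
Points of the balanced slice {0,1}^n_{n/2} are encoded as `A : Finset (Fin n)`
with `A.card = n/2`. `W[u,v] = 1/(2^{n/2} · C(n/2, Δ))` where `2Δ = |u ∆ v|`.

Fix a row `x` of `W`. A step from `x` keeps a uniformly random subset `K ⊆ x` and adds a
uniformly random `(n/2 - |K|)`-subset of the complement. Equivalently, choose a uniformly random
bijection `π : x ≃ xᶜ` first and then put `y = K ∪ π(x \ K)`. For fixed `π`, each coordinate
of `y` is `1_K(i)` or `1 - 1_K(i)`, so `K ↦ P(y)` is a multilinear polynomial of degree `≤ d` on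
the cube `{0,1}^x`, and it is nonzero at `K = x`, where `y = x`. A nonzero polynomial of degree
`≤ d` on a cube does not vanish on at least a `2^{-d}` fraction of the cube: take a monomial `x_S`
with nonzero coefficient and `|S|` maximal. Its coefficient is an alternating sum of values on
each subcube that fixes the coordinates outside `S`, so each of these `2^{n/2-|S|}` subcubes
contains a nonzero point. Hence every row of `W` restricted to the nonzero set has mass at least
`2^{-d}`.
-/

open Finset

/-- The entry of the random walk matrix `W` on the balanced slice. -/
noncomputable def Went (n : ℕ) (u v : Finset (Fin n)) : ℝ :=
  1 / (2 ^ (n / 2) * ((n / 2).choose ((symmDiff u v).card / 2)))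

section CubePolynomial

variable {ι : Type*} [DecidableEq ι]

/-- The monomial `∏_{i ∈ S} x_i` on the cube `{0,1}^ι`, a point being given by its support `A`. -/
def cubeMonomial (S A : Finset ι) : ℝ := if S ⊆ A then 1 else 0

variable (ι) in
def cubeDegLE (d : ℕ) : Submodule ℝ (Finset ι → ℝ) :=
  Submodule.span ℝ (cubeMonomial '' {S | #S ≤ d})

variable {d d' : ℕ} {f g : Finset ι → ℝ}

lemma cubeMonomial_mul (S T : Finset ι) :
    cubeMonomial S * cubeMonomial T = cubeMonomial (S ∪ T) := by
  ext A
  simp only [Pi.mul_apply, cubeMonomial, ite_zero_mul_ite_zero, mul_one, union_subset_iff]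

lemma cubeMonomial_mem_cubeDegLE {S : Finset ι} (h : #S ≤ d) :
    cubeMonomial S ∈ cubeDegLE ι d :=
  Submodule.subset_span ⟨S, h, rfl⟩

lemma cubeDegLE_mono (h : d ≤ d') : cubeDegLE ι d ≤ cubeDegLE ι d' :=
  Submodule.span_mono (Set.image_mono fun _ hS ↦ le_trans hS h)

lemma one_mem_cubeDegLE : (1 : Finset ι → ℝ) ∈ cubeDegLE ι d := by
  have : cubeMonomial (∅ : Finset ι) = 1 := by ext; simp [cubeMonomial]
  exact this ▸ cubeMonomial_mem_cubeDegLE (by simp)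

lemma mul_mem_cubeDegLE {d₁ d₂ : ℕ} (hf : f ∈ cubeDegLE ι d₁) (hg : g ∈ cubeDegLE ι d₂) :
    f * g ∈ cubeDegLE ι (d₁ + d₂) := by
  have := Submodule.mul_mem_mul hf hg
  rw [cubeDegLE, cubeDegLE, Submodule.span_mul_span] at this
  refine Submodule.span_le.2 ?_ this
  rintro _ ⟨_, ⟨S, hS, rfl⟩, _, ⟨T, hT, rfl⟩, rfl⟩
  show cubeMonomial S * cubeMonomial T ∈ _
  rw [cubeMonomial_mul]
  exact cubeMonomial_mem_cubeDegLE ((card_union_le S T).trans (add_le_add hS hT))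

lemma prod_mem_cubeDegLE {κ : Type*} (s : Finset κ) (f : κ → Finset ι → ℝ)
    (hf : ∀ j ∈ s, f j ∈ cubeDegLE ι 1) : ∏ j ∈ s, f j ∈ cubeDegLE ι #s := by
  classical
  induction s using Finset.induction_on with
  | empty => simpa using one_mem_cubeDegLE
  | insert j s hj ih =>
    rw [prod_insert hj, card_insert_of_notMem hj, add_comm]
    exact mul_mem_cubeDegLE (hf j (mem_insert_self j s))
      (ih fun i hi ↦ hf i (mem_insert_of_mem hi))

lemma comp_mem_cubeDegLE {α : Type*} [Fintype α] [DecidableEq α] {k : ℕ} {P a : Finset α → ℝ}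
    (hP : ∀ A : Finset α, #A = k → P A = ∑ S with #S ≤ d, (∏ i ∈ S, if i ∈ A then 1 else 0) * a S)
    {y : Finset ι → Finset α} (hy : ∀ K, #(y K) = k)
    (hy₁ : ∀ j, (fun K ↦ if j ∈ y K then (1 : ℝ) else 0) ∈ cubeDegLE ι 1) :
    P ∘ y ∈ cubeDegLE ι d := by
  have : P ∘ y = ∑ S with #S ≤ d, a S • ∏ i ∈ S, fun K ↦ if i ∈ y K then (1 : ℝ) else 0 := by
    ext K
    simp [hP _ (hy K), Finset.sum_apply, mul_comm]
  rw [this]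
  exact Submodule.sum_mem _ fun S hS ↦ Submodule.smul_mem _ _
    (cubeDegLE_mono (mem_filter.1 hS).2 (prod_mem_cubeDegLE _ _ fun j _ ↦ hy₁ j))

lemma exists_eq_sum_of_mem_cubeDegLE [Fintype ι] (hf : f ∈ cubeDegLE ι d) :
    ∃ c : Finset ι → ℝ, ∑ T with #T ≤ d, c T • cubeMonomial T = f := by
  rwa [cubeDegLE, show {S : Finset ι | #S ≤ d} = ↑({S | #S ≤ d} : Finset (Finset ι)) by simp,
    Submodule.mem_span_image_finset_iff_exists_fun'] at hf

lemma sum_neg_one_pow_mul_cubeMonomial {S B : Finset ι} (hB : Disjoint B S) (T : Finset ι) :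
    ∑ C ∈ S.powerset, (-1 : ℝ) ^ #C * cubeMonomial T (B ∪ (S \ C)) =
      if S ⊆ T ∧ T ⊆ B ∪ S then 1 else 0 := by
  have hmono : ∀ C ∈ S.powerset, cubeMonomial T (B ∪ (S \ C)) =
      if T ⊆ B ∪ S ∧ Disjoint C T then 1 else 0 := by
    intro C hC
    rw [mem_powerset] at hC
    simp only [cubeMonomial, subset_iff, mem_union, mem_sdiff, disjoint_left] at hB ⊢
    congr 1
    apply propext
    grind
  have hdisj : S.powerset.filter (Disjoint · T) = (S \ T).powerset := by
    ext C
    simp [subset_sdiff]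
  have halt := congrArg (Int.cast : ℤ → ℝ) (sum_powerset_neg_one_pow_card (x := S \ T))
  push_cast at halt
  rw [sum_congr rfl fun C hC ↦ by rw [hmono C hC]]
  by_cases hT : T ⊆ B ∪ S
  · simp only [hT, true_and, and_true, mul_ite, mul_one, mul_zero, ← sum_filter, hdisj, halt,
      sdiff_eq_empty_iff_subset]
  · simp [hT]

lemma sum_neg_one_pow_mul_eq_coeff_of_card_le {F : Finset (Finset ι)} {c : Finset ι → ℝ}
    {S B : Finset ι} (hS : S ∈ F) (hmax : ∀ T ∈ F, c T ≠ 0 → #T ≤ #S) (hB : Disjoint B S) :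
    ∑ C ∈ S.powerset, (-1 : ℝ) ^ #C * (∑ T ∈ F, c T • cubeMonomial T) (B ∪ (S \ C)) = c S := by
  simp only [Finset.sum_apply, Pi.smul_apply, smul_eq_mul, mul_sum]
  rw [sum_comm]
  simp_rw [mul_left_comm _ (c _), ← mul_sum, sum_neg_one_pow_mul_cubeMonomial hB]
  rw [sum_eq_single_of_mem S hS fun T hT hTS ↦ ?_]
  · simp [subset_union_right]
  · by_cases hc : c T = 0
    · simp [hc]
    · have : ¬ S ⊆ T := fun h ↦ hTS (eq_of_subset_of_card_le h (hmax T hT hc)).symm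
      simp [this]

theorem two_pow_card_le_mul_card_support [Fintype ι] (hf : f ∈ cubeDegLE ι d) (hf0 : f ≠ 0) :
    2 ^ Fintype.card ι ≤ 2 ^ d * #{A | f A ≠ 0} := by
  obtain ⟨c, rfl⟩ := exists_eq_sum_of_mem_cubeDegLE hf
  have hne : ({T | #T ≤ d ∧ c T ≠ 0} : Finset (Finset ι)).Nonempty := by
    contrapose! hf0
    rw [filter_eq_empty_iff] at hf0
    exact sum_eq_zero fun T hT ↦ by
      rw [not_not.1 fun h ↦ hf0 (mem_univ T) ⟨(mem_filter.1 hT).2, h⟩, zero_smul]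
  obtain ⟨S, hS, hSmax⟩ := exists_max_image _ card hne
  simp only [mem_filter, mem_univ, true_and] at hS hSmax
  have hwit : ∀ B ∈ Sᶜ.powerset, ∃ C ∈ S.powerset,
      (∑ T with #T ≤ d, c T • cubeMonomial T) (B ∪ (S \ C)) ≠ 0 := by
    intro B hB
    have hB : Disjoint B S := subset_compl_iff_disjoint_right.1 (mem_powerset.1 hB)
    have := sum_neg_one_pow_mul_eq_coeff_of_card_le (F := {T | #T ≤ d}) (c := c)
      (by simpa using hS.1) (fun T hT hc ↦ hSmax T ⟨by simpa using hT, hc⟩) hB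
    obtain ⟨C, hC, hne⟩ := exists_ne_zero_of_sum_ne_zero (this ▸ hS.2)
    exact ⟨C, hC, right_ne_zero_of_mul hne⟩
  choose! C hC hfC using hwit
  have hcard : #Sᶜ.powerset ≤ #{A | (∑ T with #T ≤ d, c T • cubeMonomial T) A ≠ 0} := by
    refine card_le_card_of_injOn (fun B ↦ B ∪ (S \ C B)) (fun B hB ↦ by simpa using hfC B hB) ?_
    intro B₁ hB₁ B₂ hB₂ h
    have key : ∀ B ∈ Sᶜ.powerset, (B ∪ (S \ C B)) \ S = B := fun B hB ↦ by
      rw [union_sdiff_distrib, sdiff_eq_empty_iff_subset.2 sdiff_subset, union_empty,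
        sdiff_eq_self_of_disjoint (subset_compl_iff_disjoint_right.1 (mem_powerset.1 hB))]
    rw [← key B₁ hB₁, ← key B₂ hB₂]
    exact congrArg (· \ S) h
  rw [card_powerset, card_compl] at hcard
  calc 2 ^ Fintype.card ι = 2 ^ #S * 2 ^ (Fintype.card ι - #S) := by
        rw [← pow_add, Nat.add_sub_cancel' (card_le_univ S)]
    _ ≤ 2 ^ d * _ := Nat.mul_le_mul (Nat.pow_le_pow_right two_pos hS.1) hcard

end CubePolynomial

section UniformBijection

variable {α β : Type*} [Fintype α] [DecidableEq α] [DecidableEq β]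

lemma exists_perm_map_eq {t t' : Finset β} (h : #t = #t') :
    ∃ σ : Equiv.Perm β, t.map σ.toEmbedding = t' := by
  obtain ⟨σ, hσ⟩ := (Set.powersetCard.isPretransitive (α := β) (n := #t')).exists_smul_eq
    ⟨t, h⟩ ⟨t', rfl⟩
  refine ⟨σ, ?_⟩
  simpa [map_eq_image, smul_finset_def] using congrArg Subtype.val hσ

lemma card_filter_map_eq_congr [Fintype β] {s : Finset α} {t t' : Finset β} (h : #t = #t') :
    #{π : α ≃ β | s.map π.toEmbedding = t} = #{π : α ≃ β | s.map π.toEmbedding = t'} := by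
  obtain ⟨σ, rfl⟩ := exists_perm_map_eq h
  have hmap : ∀ (π : α ≃ β) (τ : Equiv.Perm β),
      s.map (π.trans τ).toEmbedding = (s.map π.toEmbedding).map τ.toEmbedding := by
    simp [map_map]
  refine card_nbij' (·.trans σ) (·.trans σ.symm) (fun π hπ ↦ ?_) (fun π hπ ↦ ?_) ?_ ?_
  · simp only [coe_filter, mem_univ, true_and, Set.mem_ofPred_eq] at hπ ⊢
    rw [hmap, hπ]
  · simp only [coe_filter, mem_univ, true_and, Set.mem_ofPred_eq] at hπ ⊢
    rw [hmap, hπ, map_map]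
    ext
    simp
  · intro π _; ext; simp
  · intro π _; ext; simp

/-- The image of `s` under a uniformly random bijection is a uniformly random `#s`-subset. -/
theorem sum_map_equiv_mul_choose [Fintype β] (s : Finset α) (h : Finset β → ℝ) :
    (∑ π : α ≃ β, h (s.map π.toEmbedding)) * (Fintype.card β).choose #s =
      Fintype.card (α ≃ β) * ∑ t ∈ powersetCard #s univ, h t := by
  have hmaps : ∀ π ∈ (univ : Finset (α ≃ β)), s.map π.toEmbedding ∈ powersetCard #s univ := by
    simp
  have hfiber : ∀ t ∈ powersetCard #s (univ : Finset β),
      (#{π : α ≃ β | s.map π.toEmbedding = t} : ℝ) * (Fintype.card β).choose #s =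
        Fintype.card (α ≃ β) := by
    intro t ht
    rw [← card_univ (α := α ≃ β), card_eq_sum_card_fiberwise hmaps, sum_congr rfl fun t' ht' ↦
      card_filter_map_eq_congr ((mem_powersetCard.1 ht').2.trans (mem_powersetCard.1 ht).2.symm),
      sum_const, card_powersetCard, card_univ, smul_eq_mul]
    push_cast
    ring
  rw [← sum_fiberwise_of_maps_to hmaps, sum_mul, mul_sum]
  refine sum_congr rfl fun t ht ↦ ?_
  rw [sum_congr rfl fun π hπ ↦ by rw [(mem_filter.1 hπ).2], sum_const, nsmul_eq_mul,
    ← hfiber t ht]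
  ring

end UniformBijection

section Glue

variable {α : Type*} (p : α → Prop) [DecidablePred p]

/-- The subset of `α` whose part inside `p` is `K` and whose part outside `p` is `L`. -/
def glue (K : Finset {a // p a}) (L : Finset {a // ¬ p a}) : Finset α :=
  (K.disjSum L).map (Equiv.sumCompl p).toEmbedding

variable {p} {K K' : Finset {a // p a}} {L L' : Finset {a // ¬ p a}} {a : α}

lemma mem_glue_of_pos (h : p a) : a ∈ glue p K L ↔ ⟨a, h⟩ ∈ K := by
  simp [glue, mem_map_equiv, Equiv.sumCompl_symm_apply_of_pos h]

lemma mem_glue_of_neg (h : ¬ p a) : a ∈ glue p K L ↔ ⟨a, h⟩ ∈ L := by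
  simp [glue, mem_map_equiv, Equiv.sumCompl_symm_apply_of_neg h]

lemma card_glue : #(glue p K L) = #K + #L := by
  simp [glue]

lemma symmDiff_glue [DecidableEq α] :
    symmDiff (glue p K L) (glue p K' L') = glue p (symmDiff K K') (symmDiff L L') := by
  ext a
  by_cases h : p a <;> simp [mem_symmDiff, mem_glue_of_pos, mem_glue_of_neg, h]

lemma glue_univ_empty [DecidableEq α] (x : Finset α) : glue (· ∈ x) univ ∅ = x := by
  ext a
  by_cases h : a ∈ x <;> simp [mem_glue_of_pos, mem_glue_of_neg, h]

variable (p) in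
lemma sum_eq_sum_sum_glue [Fintype α] [Fintype {a // p a}] [Fintype {a // ¬ p a}]
    {M : Type*} [AddCommMonoid M] (F : Finset α → M) :
    ∑ y, F y = ∑ K, ∑ L, F (glue p K L) := by
  rw [← Fintype.sum_prod_type']
  exact (Fintype.sum_equiv (Finset.sumEquiv.toEquiv.symm.trans (Equiv.sumCompl p).finsetCongr)
    _ _ fun _ ↦ rfl).symm

lemma indicator_mem_glue_map_compl_mem_cubeDegLE [DecidableEq α] [Fintype {a // p a}]
    (π : {a // p a} ≃ {a // ¬ p a}) (j : α) :
    (fun K ↦ if j ∈ glue p K (Kᶜ.map π.toEmbedding) then (1 : ℝ) else 0) ∈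
      cubeDegLE {a // p a} 1 := by
  by_cases h : p j
  · have : (fun K ↦ if j ∈ glue p K (Kᶜ.map π.toEmbedding) then (1 : ℝ) else 0) =
        cubeMonomial {⟨j, h⟩} := by
      ext K
      simp [mem_glue_of_pos h, cubeMonomial]
    exact this ▸ cubeMonomial_mem_cubeDegLE (by simp)
  · have : (fun K ↦ if j ∈ glue p K (Kᶜ.map π.toEmbedding) then (1 : ℝ) else 0) =
        1 - cubeMonomial {π.symm ⟨j, h⟩} := by
      ext K
      by_cases hK : π.symm ⟨j, h⟩ ∈ K <;>
        simp [mem_glue_of_neg h, mem_map_equiv, cubeMonomial, hK]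
    exact this ▸ Submodule.sub_mem _ one_mem_cubeDegLE (cubeMonomial_mem_cubeDegLE (by simp))

end Glue

section Slice

variable {n : ℕ} {x : Finset (Fin n)}

lemma card_subtype_notMem (hn : Even n) (hx : #x = n / 2) :
    Fintype.card {a // a ∉ x} = n / 2 := by
  obtain ⟨r, rfl⟩ := hn
  rw [Fintype.card_subtype_compl, Fintype.card_coe, Fintype.card_fin, hx]
  omega

lemma went_glue {K : Finset {a // a ∈ x}}
    {L : Finset {a // a ∉ x}} (hL : #L = #Kᶜ) :
    Went n x (glue (· ∈ x) K L) = 1 / (2 ^ (n / 2) * (n / 2).choose #Kᶜ) := by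
  have hsymm : symmDiff x (glue (· ∈ x) K L) = glue (· ∈ x) Kᶜ L := by
    nth_rewrite 1 [← glue_univ_empty x]
    rw [symmDiff_glue]
    congr 1 <;> ext <;> simp [mem_symmDiff]
  rw [Went, hsymm, card_glue, hL, ← two_mul, Nat.mul_div_cancel_left _ two_pos]

lemma card_equiv_subtype_notMem (hn : Even n) (hx : #x = n / 2) :
    Fintype.card ({a // a ∈ x} ≃ {a // a ∉ x}) = (n / 2).factorial := by
  have hX : Fintype.card {a // a ∈ x} = n / 2 := by simp [hx]
  rw [Fintype.card_equiv (Fintype.equivOfCardEq (hX.trans (card_subtype_notMem hn hx).symm)), hX]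

theorem sum_went_mul_eq_sum_equiv (hn : Even n) (hx : #x = n / 2) (f : Finset (Fin n) → ℝ) :
    ∑ y with #y = n / 2, Went n x y * f y =
      1 / (2 ^ (n / 2) * (n / 2).factorial : ℝ) * ∑ π : {a // a ∈ x} ≃ {a // a ∉ x},
        ∑ K, f (glue (· ∈ x) K (Kᶜ.map π.toEmbedding)) := by
  set m := n / 2
  have hX : Fintype.card {a // a ∈ x} = m := by simp [hx]
  have hY : Fintype.card {a // a ∉ x} = m := card_subtype_notMem hn hx
  have hN : Fintype.card ({a // a ∈ x} ≃ {a // a ∉ x}) = m.factorial :=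
    card_equiv_subtype_notMem hn hx
  have hKc : ∀ K : Finset {a // a ∈ x}, #K + #Kᶜ = m := fun K ↦ (card_add_card_compl K).trans hX
  calc ∑ y with #y = m, Went n x y * f y
      = ∑ K, ∑ L ∈ powersetCard #Kᶜ univ,
          Went n x (glue (· ∈ x) K L) * f (glue (· ∈ x) K L) := by
        rw [sum_filter, sum_eq_sum_sum_glue (· ∈ x)]
        refine sum_congr rfl fun K _ ↦ ?_
        rw [powersetCard_eq_filter, powerset_univ, sum_filter]
        refine sum_congr rfl fun L _ ↦ ?_
        simp only [card_glue, show #K + #L = m ↔ #L = #Kᶜ by have := hKc K; omega]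
    _ = ∑ K, 1 / (2 ^ m * m.choose #Kᶜ : ℝ) *
          ∑ L ∈ powersetCard #Kᶜ univ, f (glue (· ∈ x) K L) := by
        refine sum_congr rfl fun K _ ↦ ?_
        rw [mul_sum]
        exact sum_congr rfl fun L hL ↦ by rw [went_glue (mem_powersetCard.1 hL).2]
    _ = ∑ K, 1 / (2 ^ m * m.factorial : ℝ) *
          ∑ π : {a // a ∈ x} ≃ {a // a ∉ x}, f (glue (· ∈ x) K (Kᶜ.map π.toEmbedding)) := by
        refine sum_congr rfl fun K _ ↦ ?_
        have h := sum_map_equiv_mul_choose Kᶜ fun L ↦ f (glue (· ∈ x) K L)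
        rw [hY, hN] at h
        have hC : (m.choose #Kᶜ : ℝ) ≠ 0 :=
          Nat.cast_ne_zero.2 (Nat.choose_pos (by have := hKc K; omega)).ne'
        field_simp
        linear_combination -h
    _ = _ := by rw [← mul_sum, sum_comm]

theorem one_div_two_pow_le_sum_went (hn : Even n) {d : ℕ} {P a : Finset (Fin n) → ℝ}
    (hP : ∀ A : Finset (Fin n), #A = n / 2 →
      P A = ∑ S with #S ≤ d, (∏ i ∈ S, if i ∈ A then 1 else 0) * a S)
    (hx : #x = n / 2) (hPx : P x ≠ 0) :
    1 / 2 ^ d ≤ ∑ y with #y = n / 2 ∧ P y ≠ 0, Went n x y := by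
  have hKc : ∀ K : Finset {a // a ∈ x}, #K + #Kᶜ = n / 2 := fun K ↦
    (card_add_card_compl K).trans (by simp [hx])
  have hcube : ∀ π : {a // a ∈ x} ≃ {a // a ∉ x},
      (2 : ℝ) ^ (n / 2) / 2 ^ d ≤
        ∑ K, if P (glue (· ∈ x) K (Kᶜ.map π.toEmbedding)) ≠ 0 then 1 else 0 := by
    intro π
    have hdeg := comp_mem_cubeDegLE hP (y := fun K ↦ glue (· ∈ x) K (Kᶜ.map π.toEmbedding))
      (fun K ↦ by rw [card_glue, card_map, hKc]) (indicator_mem_glue_map_compl_mem_cubeDegLE π)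
    have hne : (P ∘ fun K ↦ glue (· ∈ x) K (Kᶜ.map π.toEmbedding)) ≠ 0 := fun h ↦
      hPx (by
        simpa only [Function.comp_apply, compl_univ, map_empty, glue_univ_empty, Pi.zero_apply]
          using congrFun h univ)
    have := two_pow_card_le_mul_card_support hdeg hne
    rw [Fintype.card_coe, hx] at this
    rw [sum_boole, div_le_iff₀ (by positivity), mul_comm]
    exact_mod_cast this
  rw [← filter_filter, sum_filter, sum_congr rfl fun y _ ↦ (mul_boole _ _).symm,
    sum_went_mul_eq_sum_equiv hn hx]
  have hsum := card_nsmul_le_sum univ _ _ fun π _ ↦ hcube π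
  rw [card_univ, card_equiv_subtype_notMem hn hx, nsmul_eq_mul] at hsum
  calc (1 : ℝ) / 2 ^ d
      = 1 / (2 ^ (n / 2) * (n / 2).factorial) * ((n / 2).factorial * (2 ^ (n / 2) / 2 ^ d)) :=
        by field_simp
    _ ≤ _ := by gcongr

end Slice

theorem two_step_lower_bound_general
    (n : ℕ) (hn : Even n) (d : ℕ)
    (P : Finset (Fin n) → ℝ)
    (hP : ∃ a : Finset (Fin n) → ℝ, ∀ A : Finset (Fin n), A.card = n / 2 →
      P A = ∑ S ∈ Finset.univ.filter (fun S : Finset (Fin n) => S.card ≤ d),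
        (∏ i ∈ S, if i ∈ A then (1 : ℝ) else 0) * a S) :
    ((((Finset.univ.filter
          (fun A : Finset (Fin n) => A.card = n / 2 ∧ P A ≠ 0)).card : ℝ) /
        (n.choose (n / 2) : ℝ)) * (1 / 2 ^ d)) ≤
      (1 / (n.choose (n / 2) : ℝ)) *
        ∑ x ∈ Finset.univ.filter
            (fun A : Finset (Fin n) => A.card = n / 2 ∧ P A ≠ 0),
          ∑ y ∈ Finset.univ.filter
              (fun A : Finset (Fin n) => A.card = n / 2 ∧ P A ≠ 0),
            Went n x y := by
  obtain ⟨a, ha⟩ := hP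
  set T : Finset (Finset (Fin n)) := {A | #A = n / 2 ∧ P A ≠ 0}
  have hrow : ∀ x ∈ T, (1 : ℝ) / 2 ^ d ≤ ∑ y ∈ T, Went n x y := fun x hx ↦
    one_div_two_pow_le_sum_went hn ha (mem_filter.1 hx).2.1 (mem_filter.1 hx).2.2
  calc (#T : ℝ) / n.choose (n / 2) * (1 / 2 ^ d)
      = 1 / n.choose (n / 2) * (#T • ((1 : ℝ) / 2 ^ d)) := by rw [nsmul_eq_mul]; ring
    _ ≤ 1 / n.choose (n / 2) * ∑ x ∈ T, ∑ y ∈ T, Went n x y := by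
        gcongr
        exact card_nsmul_le_sum T _ _ hrow

theorem two_step_lower_bound
    (n : ℕ) (hn : Even n) (d : ℕ)
    (P : Finset (Fin n) → ℝ)
    (hP : ∃ a : Finset (Fin n) → ℝ, ∀ A : Finset (Fin n), A.card = n / 2 →
      P A = ∑ S ∈ Finset.univ.filter (fun S : Finset (Fin n) => S.card ≤ d),
        (∏ i ∈ S, if i ∈ A then (1 : ℝ) else 0) * a S)
    (hnz : ∃ A : Finset (Fin n), A.card = n / 2 ∧ P A ≠ 0) :
    ((((Finset.univ.filter
          (fun A : Finset (Fin n) => A.card = n / 2 ∧ P A ≠ 0)).card : ℝ) /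
        (n.choose (n / 2) : ℝ)) * (1 / 2 ^ d)) ≤
      (1 / (n.choose (n / 2) : ℝ)) *
        ∑ x ∈ Finset.univ.filter
            (fun A : Finset (Fin n) => A.card = n / 2 ∧ P A ≠ 0),
          ∑ y ∈ Finset.univ.filter
              (fun A : Finset (Fin n) => A.card = n / 2 ∧ P A ≠ 0),
            Went n x y :=
  two_step_lower_bound_general n hn d P hP
end

section
/- There exists an absolute constant C > 0 such that for every natural number m ≥ 1: 0 < Σ_{d=0}^{m} C(2m, 2d) / (2^m · C(m, d)) ≤ C · √m, where C(a,b) denotes the binomial coefficient. -/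
/-!
The `d`-th summand is at most `√(4m+1) · C(m,d) / 2^m`, and the `C(m,d) / 2^m` sum to `1`.
The summand bound comes from comparing descending factorials,
`C(2m,2d) · C(2d,d) ≤ 4^d · C(m,d)^2`, together with the lower bound
`16^d ≤ (4d+1) · C(2d,d)^2` on the central binomial coefficient.
-/

open Finset Nat

namespace Nat

theorem descFactorial_two_mul_le_sq (m d : ℕ) :
    (2 * m).descFactorial (2 * d) ≤ (2 ^ d * m.descFactorial d) ^ 2 := by
  induction d with
  | zero => simp
  | succ d ih =>
    rw [show 2 * (d + 1) = 2 * d + 1 + 1 by ring, descFactorial_succ, descFactorial_succ,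
      descFactorial_succ]
    calc (2 * m - (2 * d + 1)) * ((2 * m - 2 * d) * (2 * m).descFactorial (2 * d))
        ≤ 2 * (m - d) * (2 * (m - d) * (2 ^ d * m.descFactorial d) ^ 2) :=
          Nat.mul_le_mul (by omega) (Nat.mul_le_mul (by omega) ih)
      _ = (2 ^ (d + 1) * ((m - d) * m.descFactorial d)) ^ 2 := by ring

theorem choose_two_mul_mul_centralBinom_le (m d : ℕ) :
    (2 * m).choose (2 * d) * d.centralBinom ≤ 4 ^ d * m.choose d ^ 2 := by
  have h := descFactorial_two_mul_le_sq m d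
  have hfac : (2 * d)! = d.centralBinom * d ! ^ 2 := by
    rw [centralBinom_eq_two_mul_choose, two_mul, ← add_choose_mul_factorial_mul_factorial]; ring
  rw [descFactorial_eq_factorial_mul_choose, descFactorial_eq_factorial_mul_choose, hfac] at h
  refine Nat.le_of_mul_le_mul_left ?_ (pow_pos (factorial_pos d) 2)
  calc d ! ^ 2 * ((2 * m).choose (2 * d) * d.centralBinom)
      ≤ (2 ^ d * (d ! * m.choose d)) ^ 2 := by linarith
    _ = d ! ^ 2 * (4 ^ d * m.choose d ^ 2) := by
        rw [mul_pow, ← pow_mul, mul_comm d 2, pow_mul]; ring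

theorem sixteen_pow_le_mul_centralBinom_sq (d : ℕ) :
    16 ^ d ≤ (4 * d + 1) * d.centralBinom ^ 2 := by
  induction d with
  | zero => simp
  | succ d ih =>
    refine Nat.le_of_mul_le_mul_left ?_ (pow_pos d.succ_pos 2)
    calc (d + 1) ^ 2 * 16 ^ (d + 1) = 16 * (d + 1) ^ 2 * 16 ^ d := by ring
      _ ≤ 16 * (d + 1) ^ 2 * ((4 * d + 1) * d.centralBinom ^ 2) := by gcongr
      _ ≤ (4 * (d + 1) + 1) * (2 * (2 * d + 1)) ^ 2 * d.centralBinom ^ 2 := by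
          rw [← mul_assoc]; gcongr ?_ * _; ring_nf; omega
      _ = (4 * (d + 1) + 1) * ((d + 1) * (d + 1).centralBinom) ^ 2 := by
          rw [succ_mul_centralBinom_succ]; ring
      _ = (d + 1) ^ 2 * ((4 * (d + 1) + 1) * (d + 1).centralBinom ^ 2) := by ring

theorem choose_two_mul_sq_le (m d : ℕ) :
    (2 * m).choose (2 * d) ^ 2 ≤ (4 * d + 1) * m.choose d ^ 4 := by
  refine Nat.le_of_mul_le_mul_left ?_ (pow_pos d.centralBinom_pos 2)
  calc d.centralBinom ^ 2 * (2 * m).choose (2 * d) ^ 2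
      = ((2 * m).choose (2 * d) * d.centralBinom) ^ 2 := by ring
    _ ≤ (4 ^ d * m.choose d ^ 2) ^ 2 :=
        Nat.pow_le_pow_left (choose_two_mul_mul_centralBinom_le m d) 2
    _ = 16 ^ d * m.choose d ^ 4 := by
        rw [mul_pow, ← pow_mul, ← pow_mul, mul_comm d 2, pow_mul]; ring
    _ ≤ (4 * d + 1) * d.centralBinom ^ 2 * m.choose d ^ 4 := by
        gcongr; exact sixteen_pow_le_mul_centralBinom_sq d
    _ = d.centralBinom ^ 2 * ((4 * d + 1) * m.choose d ^ 4) := by ring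

end Nat

theorem choose_two_mul_le_sqrt_mul_choose_sq {m d : ℕ} (hdm : d ≤ m) :
    ((2 * m).choose (2 * d) : ℝ) ≤ √(4 * m + 1) * (m.choose d : ℝ) ^ 2 := by
  have hsq : ((2 * m).choose (2 * d) : ℝ) ^ 2 ≤ (4 * m + 1) * (m.choose d : ℝ) ^ 4 := by
    calc ((2 * m).choose (2 * d) : ℝ) ^ 2 ≤ (4 * d + 1) * (m.choose d : ℝ) ^ 4 := by
          exact_mod_cast Nat.choose_two_mul_sq_le m d
      _ ≤ (4 * m + 1) * (m.choose d : ℝ) ^ 4 := by gcongr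
  calc ((2 * m).choose (2 * d) : ℝ) ≤ √((4 * m + 1) * (m.choose d : ℝ) ^ 4) :=
        Real.le_sqrt_of_sq_le hsq
    _ = √(4 * m + 1) * (m.choose d : ℝ) ^ 2 := by
        rw [Real.sqrt_mul (by positivity), show 4 = 2 * 2 by rfl, pow_mul,
          Real.sqrt_sq (by positivity)]

theorem sum_choose_two_mul_div_le_sqrt (m : ℕ) :
    ∑ d ∈ range (m + 1), ((2 * m).choose (2 * d) : ℝ) / (2 ^ m * (m.choose d : ℝ)) ≤
      √(4 * m + 1) := by
  calc ∑ d ∈ range (m + 1), ((2 * m).choose (2 * d) : ℝ) / (2 ^ m * (m.choose d : ℝ))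
      ≤ ∑ d ∈ range (m + 1), √(4 * m + 1) / 2 ^ m * (m.choose d : ℝ) := by
        refine sum_le_sum fun d hd => ?_
        have hdm : d ≤ m := Nat.lt_succ_iff.mp (mem_range.mp hd)
        have hpos : (0 : ℝ) < m.choose d := by exact_mod_cast choose_pos hdm
        rw [div_le_iff₀ (by positivity)]
        calc ((2 * m).choose (2 * d) : ℝ) ≤ √(4 * m + 1) * (m.choose d : ℝ) ^ 2 :=
              choose_two_mul_le_sqrt_mul_choose_sq hdm
          _ = _ := by field_simp
    _ = √(4 * m + 1) := by
        rw [← mul_sum, ← Nat.cast_sum, sum_range_choose]; push_cast; field_simp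

theorem cayley_top_eigenvalue_bound :
    ∃ C : ℝ, C > 0 ∧
      ∀ m : ℕ, 1 ≤ m →
        0 < ∑ d ∈ Finset.range (m + 1),
              ((2 * m).choose (2 * d) : ℝ) / (2 ^ m * (m.choose d : ℝ)) ∧
        ∑ d ∈ Finset.range (m + 1),
            ((2 * m).choose (2 * d) : ℝ) / (2 ^ m * (m.choose d : ℝ)) ≤
          C * Real.sqrt m := by
  refine ⟨√5, by positivity, fun m hm => ⟨?_, ?_⟩⟩
  · refine sum_pos' (fun d _ => by positivity) ⟨0, by simp, ?_⟩
    simp only [mul_zero, choose_zero_right, Nat.cast_one, mul_one]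
    positivity
  · have hm' : (1 : ℝ) ≤ m := by exact_mod_cast hm
    calc _ ≤ √(4 * m + 1) := sum_choose_two_mul_div_le_sqrt m
      _ ≤ √(5 * m) := Real.sqrt_le_sqrt (by linarith)
      _ = √5 * √m := Real.sqrt_mul (by norm_num) _
end

section
/- There exist absolute constants δ > 0, c > 0 and N such that for every even natural number n ≥ N, writing m = n/2, the following hold for permutations σ of {1, …, m}: (i) for every integer t with 1 ≤ t ≤ n^δ, the number of permutations σ that are t-good is at most m! / n^{c·t}; (ii) for every integer t with n^δ < t ≤ m, the number of permutations σ that are t-self-good is at most m! / n^{c·t}. -/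
/-!
Both counts are union bounds over the `⌈t/2⌉`-subsets `S` of the first `t` indices. A `t`-good `σ`
sends at least `⌈t/2⌉` of the first `t` indices back among them, since these indices are covered by
`A ∪ σ(A)` with `A` the set of such indices; a `t`-self-good `σ` fixes at least `⌈t/2⌉` of them,
since otherwise `⌊t/2⌋` non-fixed ones would form a forbidden `T`. Prescribing the images of the
points of `S` leaves at most `(m - |S|)!` permutations, so with `s = ⌈t/2⌉`

  `#t-good ≤ C(t,s) t^s (m-s)!`  and  `#t-self-good ≤ C(t,s) (m-s)!`.

Against `m! ≥ (m+1-s)^s (m-s)!` the first bound wins when `t² ≪ m`, and against `m! ≥ s! (m-s)!`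
the second wins when `2^t ≪ s!`, i.e. for large `t`, because `s! ≥ (s/e)^s`. Writing
`y = n^(1/80)`, the choice `δ = 1/10`, `c = 1/80` turns every power of `n` into a power of `y`.
-/

open Finset

-- Indices are 0-based: the paper's `i ∈ {1,…,t}` is `(i : ℕ) < t` for `i : Fin m`.
def tGood (m t : ℕ) (σ : Equiv.Perm (Fin m)) : Prop :=
  ∀ i : Fin m, (i : ℕ) < t → ((σ i : ℕ) < t ∨ (σ⁻¹ i : ℕ) < t)

def tSelfGood (m t : ℕ) (σ : Equiv.Perm (Fin m)) : Prop :=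
  tGood m t σ ∧
    ∀ T : Finset (Fin m), (∀ i ∈ T, (i : ℕ) < t) → T.card = t / 2 →
      ∃ i ∈ T, σ i = i

instance (m t : ℕ) : DecidablePred (tGood m t) := fun σ => by
  unfold tGood; infer_instance

instance (m t : ℕ) : DecidablePred (tSelfGood m t) := fun σ => by
  unfold tSelfGood tGood; infer_instance

open Nat

theorem Real.pow_le_factorial_of_three_mul_le {a : ℝ} {s : ℕ} (ha : 0 ≤ a) (h : 3 * a ≤ s) :
    a ^ s ≤ s ! := by
  have h_exp : (s : ℝ) ^ s ≤ s ! * Real.exp 1 ^ s := by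
    rw [Real.exp_one_pow, ← div_le_iff₀' (by positivity)]
    exact Real.pow_div_factorial_le_exp _ s.cast_nonneg s
  have h3 : (3 : ℝ) ^ s * a ^ s ≤ 3 ^ s * s ! := by
    calc (3 : ℝ) ^ s * a ^ s = (3 * a) ^ s := (mul_pow _ _ _).symm
      _ ≤ (s : ℝ) ^ s := by gcongr
      _ ≤ s ! * Real.exp 1 ^ s := h_exp
      _ ≤ 3 ^ s * s ! := by rw [mul_comm]; gcongr; exact Real.exp_one_lt_three.le
  exact le_of_mul_le_mul_left h3 (by positivity)

theorem Finset.card_filter_le_choose_mul {α β : Type*} [Fintype β] {p : β → Prop}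
    [DecidablePred p] (P : Finset α) (s B : ℕ) (A : Finset α → Finset β)
    (hp : ∀ b, p b → ∃ S ⊆ P, #S = s ∧ b ∈ A S) (hA : ∀ S, #S = s → #(A S) ≤ B) :
    #{b | p b} ≤ (#P).choose s * B := by
  classical
  calc #{b | p b} ≤ #((P.powersetCard s).biUnion A) := by
        refine card_le_card fun b hb => ?_
        obtain ⟨S, hSP, hS, hbS⟩ := hp b (mem_filter.1 hb).2
        exact mem_biUnion.2 ⟨S, mem_powersetCard.2 ⟨hSP, hS⟩, hbS⟩
    _ ≤ ∑ S ∈ P.powersetCard s, #(A S) := card_biUnion_le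
    _ ≤ #(P.powersetCard s) * B :=
        sum_le_card_nsmul _ _ _ fun S hS => hA S (mem_powersetCard.1 hS).2
    _ = (#P).choose s * B := by rw [card_powersetCard]

namespace Equiv.Perm

variable {α : Type*} [Fintype α] [DecidableEq α]

theorem card_filter_forall_mem_apply_eq_self (S : Finset α) :
    #{σ : Perm α | ∀ i ∈ S, σ i = i} = (Fintype.card α - #S)! := by
  calc #{σ : Perm α | ∀ i ∈ S, σ i = i}
      = Fintype.card {σ : Perm α // ∀ i, ¬i ∉ S → σ i = i} := by
        rw [Fintype.card_subtype]; simp only [not_not]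
    _ = Fintype.card (Perm {i // i ∉ S}) :=
        (Fintype.card_congr (Perm.subtypeEquivSubtypePerm _)).symm
    _ = (Fintype.card α - #S)! := by
        rw [Fintype.card_perm, Fintype.card_subtype_compl, Fintype.card_coe]

theorem card_filter_forall_mem_apply_eq (σ₀ : Perm α) (S : Finset α) :
    #{σ : Perm α | ∀ i ∈ S, σ i = σ₀ i} = (Fintype.card α - #S)! := by
  rw [← card_filter_forall_mem_apply_eq_self S]
  refine card_equiv (Equiv.mulLeft σ₀⁻¹) fun σ => ?_
  simp [Equiv.eq_symm_apply, eq_comm]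

theorem card_filter_forall_mem_apply_mem_le (S P : Finset α) :
    #{σ : Perm α | ∀ i ∈ S, σ i ∈ P} ≤ #P ^ #S * (Fintype.card α - #S)! := by
  set good : Finset (Perm α) := {σ | ∀ i ∈ S, σ i ∈ P}
  let restrict : Perm α → (S → α) := fun σ i => σ i
  have h_fiber : ∀ g ∈ good.image restrict,
      #{σ ∈ good | restrict σ = g} ≤ (Fintype.card α - #S)! := by
    intro g hg
    obtain ⟨σ₀, -, rfl⟩ := mem_image.1 hg
    rw [← card_filter_forall_mem_apply_eq σ₀ S]
    refine card_le_card fun σ hσ => ?_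
    simp only [mem_filter, mem_univ, true_and, restrict, funext_iff, Subtype.forall] at hσ ⊢
    exact hσ.2
  have h_image : good.image restrict ⊆ Fintype.piFinset fun _ => P := by
    intro g hg
    obtain ⟨σ, hσ, rfl⟩ := mem_image.1 hg
    simp only [mem_filter, mem_univ, true_and, good] at hσ
    simpa [restrict] using hσ
  calc #good ≤ (Fintype.card α - #S)! * #(good.image restrict) :=
        card_le_mul_card_image _ _ h_fiber
    _ ≤ (Fintype.card α - #S)! * #P ^ #S := by
        gcongr
        simpa using card_le_card h_image
    _ = #P ^ #S * (Fintype.card α - #S)! := mul_comm _ _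

end Equiv.Perm

section GoodPermutations

open Equiv

def lowerIndices (m t : ℕ) : Finset (Fin m) := {i | (i : ℕ) < t}

@[simp]
theorem mem_lowerIndices {m t : ℕ} {i : Fin m} : i ∈ lowerIndices m t ↔ (i : ℕ) < t := by
  simp [lowerIndices]

theorem card_lowerIndices {m t : ℕ} (htm : t ≤ m) : #(lowerIndices m t) = t := by
  simp [lowerIndices, Fin.card_filter_val_lt, htm]

variable {m t : ℕ} {σ : Perm (Fin m)}

theorem tGood.exists_subset_forall_apply_mem (hσ : tGood m t σ) (htm : t ≤ m) :
    ∃ S ⊆ lowerIndices m t, #S = (t + 1) / 2 ∧ ∀ i ∈ S, σ i ∈ lowerIndices m t := by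
  set P := lowerIndices m t
  set A := {i ∈ P | σ i ∈ P}
  have h_cover : P ⊆ A ∪ A.image σ := by
    intro i hi
    rcases hσ i (mem_lowerIndices.1 hi) with h | h
    · exact mem_union_left _ (mem_filter.2 ⟨hi, mem_lowerIndices.2 h⟩)
    · refine mem_union_right _ (mem_image.2 ⟨σ⁻¹ i, mem_filter.2 ⟨mem_lowerIndices.2 h, ?_⟩, ?_⟩)
      · simpa using hi
      · simp
  have h_card : t ≤ 2 * #A := by
    calc t = #P := (card_lowerIndices htm).symm
      _ ≤ #(A ∪ A.image σ) := card_le_card h_cover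
      _ ≤ #A + #(A.image σ) := card_union_le _ _
      _ ≤ 2 * #A := by linarith [Finset.card_image_le (s := A) (f := σ)]
  obtain ⟨S, hSA, hS⟩ := exists_subset_card_eq (s := A) (n := (t + 1) / 2) (by omega)
  exact ⟨S, hSA.trans (filter_subset _ _), hS, fun i hi => (mem_filter.1 (hSA hi)).2⟩

theorem tSelfGood.exists_subset_forall_apply_eq_self (hσ : tSelfGood m t σ) (htm : t ≤ m) :
    ∃ S ⊆ lowerIndices m t, #S = (t + 1) / 2 ∧ ∀ i ∈ S, σ i = i := by
  set P := lowerIndices m t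
  set F := {i ∈ P | σ i = i}
  suffices h_card : (t + 1) / 2 ≤ #F by
    obtain ⟨S, hSF, hS⟩ := exists_subset_card_eq h_card
    exact ⟨S, hSF.trans (filter_subset _ _), hS, fun i hi => (mem_filter.1 (hSF hi)).2⟩
  by_contra! h_few
  have h_rest : t / 2 ≤ #(P \ F) := by
    have h_sdiff : #(P \ F) = t - #F := by
      rw [card_sdiff_of_subset (filter_subset _ _), card_lowerIndices htm]
    omega
  obtain ⟨T, hTP, hT⟩ := exists_subset_card_eq h_rest
  obtain ⟨i, hiT, hi⟩ :=
    hσ.2 T (fun i hi => mem_lowerIndices.1 (mem_sdiff.1 (hTP hi)).1) hT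
  have hiPF := mem_sdiff.1 (hTP hiT)
  exact hiPF.2 (mem_filter.2 ⟨hiPF.1, hi⟩)

theorem card_tGood_le (htm : t ≤ m) :
    #{σ | tGood m t σ} ≤ t.choose ((t + 1) / 2) * (t ^ ((t + 1) / 2) * (m - (t + 1) / 2)!) := by
  refine (card_filter_le_choose_mul _ _ _ (fun S => {σ | ∀ i ∈ S, σ i ∈ lowerIndices m t})
    (fun σ hσ => by simpa using hσ.exists_subset_forall_apply_mem htm) fun S hS => ?_).trans_eq
    (by rw [card_lowerIndices htm])
  simpa [hS, card_lowerIndices htm] using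
    Perm.card_filter_forall_mem_apply_mem_le S (lowerIndices m t)

theorem card_tSelfGood_le (htm : t ≤ m) :
    #{σ | tSelfGood m t σ} ≤ t.choose ((t + 1) / 2) * (m - (t + 1) / 2)! := by
  refine (card_filter_le_choose_mul _ _ _ (fun S => {σ | ∀ i ∈ S, σ i = i})
    (fun σ hσ => by simpa using hσ.exists_subset_forall_apply_eq_self htm) fun S hS => ?_).trans_eq
    (by rw [card_lowerIndices htm])
  have h := Perm.card_filter_forall_mem_apply_eq_self S
  rw [Fintype.card_fin, hS] at h
  -- the two filters differ only in their `Decidable` instances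
  exact le_of_eq (by convert h)

theorem card_tGood_mul_pow_le {y : ℝ} (hy : 1 ≤ y) (h : (t : ℝ) ^ 2 * y ^ 2 + t ≤ m) :
    #{σ | tGood m t σ} * y ^ t ≤ m ! := by
  set s := (t + 1) / 2
  have hts : t ≤ 2 * s := by omega
  have hst : s ≤ t := by omega
  have htm : t ≤ m := by exact_mod_cast (le_add_of_nonneg_left (by positivity)).trans h
  have h_count : (#{σ | tGood m t σ} : ℝ) ≤ t ^ s * t ^ s * (m - s)! := by
    have := (card_tGood_le htm).trans (Nat.mul_le_mul_right _ (choose_le_pow t s))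
    exact_mod_cast this.trans_eq (Nat.mul_assoc _ _ _).symm
  have h_base : (t : ℝ) ^ 2 * y ^ 2 ≤ (m - s + 1 : ℕ) := by
    rw [Nat.cast_add_one, Nat.cast_sub (by omega)]
    linarith [(Nat.cast_le (α := ℝ)).2 hst]
  have h_fact : (m - s)! * (m - s + 1) ^ s ≤ m ! := by
    simpa [Nat.sub_add_cancel (hst.trans htm)] using
      factorial_mul_pow_le_factorial (m := m - s) (n := s)
  calc (#{σ | tGood m t σ} : ℝ) * y ^ t ≤ t ^ s * t ^ s * (m - s)! * (y ^ 2) ^ s := by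
        rw [← pow_mul]
        gcongr
    _ = ((t : ℝ) ^ 2 * y ^ 2) ^ s * (m - s)! := by ring
    _ ≤ (m - s + 1 : ℕ) ^ s * (m - s)! := by gcongr
    _ ≤ m ! := by exact_mod_cast (mul_comm _ _).trans_le h_fact

theorem card_tSelfGood_mul_pow_le {y : ℝ} (hy : 1 ≤ y) (htm : t ≤ m) (h : 24 * y ^ 2 ≤ t) :
    #{σ | tSelfGood m t σ} * y ^ t ≤ m ! := by
  set s := (t + 1) / 2
  have hts : t ≤ 2 * s := by omega
  have hsm : s ≤ m := by omega
  have h_count : (#{σ | tSelfGood m t σ} : ℝ) ≤ 2 ^ t * (m - s)! := by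
    exact_mod_cast (card_tSelfGood_le htm).trans (Nat.mul_le_mul_right _ (choose_le_two_pow t s))
  have h_fact : (4 * y ^ 2) ^ s ≤ (s ! : ℝ) := by
    have : (t : ℝ) ≤ 2 * s := by exact_mod_cast hts
    exact Real.pow_le_factorial_of_three_mul_le (by positivity) (by linarith)
  calc (#{σ | tSelfGood m t σ} : ℝ) * y ^ t ≤ (2 * y) ^ t * (m - s)! := by
        rw [mul_pow, mul_right_comm]
        gcongr
    _ ≤ (2 * y) ^ (2 * s) * (m - s)! := by
        gcongr
        linarith
    _ = (4 * y ^ 2) ^ s * (m - s)! := by rw [pow_mul]; ring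
    _ ≤ s ! * (m - s)! := by gcongr
    _ ≤ m ! := by
        exact_mod_cast Nat.le_of_dvd (factorial_pos m) (factorial_mul_factorial_dvd_factorial hsm)

end GoodPermutations

theorem sq_mul_sq_add_le_half_pow_eighty {x y : ℝ} (hy : 2 ≤ y) (hx : 0 ≤ x) (hxy : x ≤ y ^ 8) :
    x ^ 2 * y ^ 2 + x ≤ y ^ 80 / 2 := by
  have h_sq : x ^ 2 * y ^ 2 ≤ y ^ 18 :=
    calc x ^ 2 * y ^ 2 ≤ (y ^ 8) ^ 2 * y ^ 2 := by gcongr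
      _ = y ^ 18 := by ring
  have h_y8 : y ^ 8 ≤ y ^ 18 := pow_le_pow_right₀ (by linarith) (by norm_num)
  have h_y18 : 4 * y ^ 18 ≤ y ^ 80 :=
    calc 4 * y ^ 18 ≤ y ^ 62 * y ^ 18 := by
          gcongr
          exact le_trans (by norm_num) (pow_le_pow_left₀ (by norm_num) hy 62)
      _ = y ^ 80 := by ring
  linarith

theorem good_matching_count_bound :
    ∃ (δ c : ℝ) (N : ℕ), δ > 0 ∧ c > 0 ∧
      ∀ n : ℕ, Even n → N ≤ n →
        (∀ t : ℕ, 1 ≤ t → (t : ℝ) ≤ (n : ℝ) ^ δ →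
          ((Finset.univ.filter
              (fun σ : Equiv.Perm (Fin (n / 2)) => tGood (n / 2) t σ)).card : ℝ) ≤
            ((n / 2).factorial : ℝ) / (n : ℝ) ^ (c * t)) ∧
        (∀ t : ℕ, (n : ℝ) ^ δ < (t : ℝ) → t ≤ n / 2 →
          ((Finset.univ.filter
              (fun σ : Equiv.Perm (Fin (n / 2)) => tSelfGood (n / 2) t σ)).card : ℝ) ≤
            ((n / 2).factorial : ℝ) / (n : ℝ) ^ (c * t)) := by
  refine ⟨1 / 10, 1 / 80, 2 ^ 80, by norm_num, by norm_num, fun n hn hN => ?_⟩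
  set y : ℝ := (n : ℝ) ^ ((1 : ℝ) / 80)
  have hn_rpow (k : ℕ) : (n : ℝ) ^ (1 / 80 * (k : ℝ)) = y ^ k :=
    Real.rpow_mul_natCast n.cast_nonneg _ k
  have hn_y : (n : ℝ) = y ^ 80 := by rw [← hn_rpow]; norm_num
  have hδ : (n : ℝ) ^ ((1 : ℝ) / 10) = y ^ 8 := by rw [← hn_rpow]; norm_num
  have hy : 2 ≤ y := le_of_pow_le_pow_left₀ (n := 80) (by norm_num) (by positivity)
    (by rw [← hn_y]; exact_mod_cast hN)
  have hm : ((n / 2 : ℕ) : ℝ) = y ^ 80 / 2 := by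
    rw [Nat.cast_div_charZero hn.two_dvd, hn_y, Nat.cast_ofNat]
  refine ⟨fun t _ ht => ?_, fun t ht htm => ?_⟩
  · rw [le_div_iff₀ (by positivity), hn_rpow]
    refine card_tGood_mul_pow_le (by linarith) ?_
    rw [hm]
    exact sq_mul_sq_add_le_half_pow_eighty hy t.cast_nonneg (hδ ▸ ht)
  · rw [le_div_iff₀ (by positivity), hn_rpow]
    refine card_tSelfGood_mul_pow_le (by linarith) htm ?_
    rw [hδ] at ht
    have h_y6 : 24 ≤ y ^ 6 := le_trans (by norm_num) (pow_le_pow_left₀ (by norm_num) hy 6)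
    nlinarith [pow_nonneg (by linarith : (0 : ℝ) ≤ y) 2]
end

section
/- Let p be a prime, q = p^ℓ a power of p, and let n, k, d be natural numbers with d ≤ k ≤ n − d such that k is (d,p)-good. Then every degree-d polynomial function f : {0,1}^n_k → Z_q can be written uniquely as a Z_q-linear combination of the homogeneous degree-d multilinear monomials: there exist unique coefficients b_T ∈ Z_q, one for each T ⊆ {1,…,n} with |T| = d, such that f(x) = Σ_{|T| = d} b_T · ∏_{i∈T} x_i for all x ∈ {0,1}^n_k. -/
/-!
STATEMENT 10: For (d,p)-good slices, the homogeneous degree-d multilinear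
monomials form a basis: every degree-d polynomial function on the slice
{0,1}^n_k with values in Z_q (q = p^ℓ) is a unique Z_q-linear combination of
monomials ∏_{i∈T} x_i with |T| = d.
Points of the slice are encoded as `A : Finset (Fin n)` with `A.card = k`.
Writing d = Σ b_j p^j and k = Σ a_j p^j in base p, with ℓ' = Nat.log p d the
index of the leading digit of d, k is (d,p)-good iff k ≥ d, a_j = b_j for
j < ℓ' (equivalently k ≡ d mod p^ℓ') and a_{ℓ'} ≥ b_{ℓ'}.
-/

open Finset

/-- `k` is a `(d,p)`-good slice. -/
def IsGoodSlice (p d k : ℕ) : Prop :=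
  d ≤ k ∧
    k % p ^ (Nat.log p d) = d % p ^ (Nat.log p d) ∧
    d / p ^ (Nat.log p d) % p ≤ k / p ^ (Nat.log p d) % p

/-!
Over `ℤ/p^ℓ` the binomial coefficients `C(k - s, d - s)`, `s ≤ d`, are units. Indeed, with
`L = log_p d`, `k - s ≡ d - s (mod p^L)`, so Lucas' theorem reduces `C(k - s, d - s)` modulo `p`
to `C(⌊(k - s)/p^L⌋, ⌊(d - s)/p^L⌋)`, and goodness of `k` says that adding `k - d` to `d - s`
causes no carry at the digit `L`.

Existence: on the slice, a monomial `x^S` with `|S| ≤ d` equals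
`C(k - |S|, d - |S|)⁻¹ · Σ_{S ⊆ T, |T| = d} x^T`, because a `k`-set containing `S` contains
`C(k - |S|, d - |S|)` such `T`.

Uniqueness: suppose `Σ_{T ⊆ A, |T| = d} g T = 0` for all `k`-subsets `A` of `U`, `k + d ≤ |U|`.
For `i, j ∈ U`, the function `T ↦ g (T ∪ {i}) - g (T ∪ {j})` satisfies the same hypothesis for
`(d - 1, k - 1)` on `U \ {i, j}`, so by induction it vanishes. Thus `g` is invariant under
exchanging one element, hence constant on the `d`-subsets of `U`, and `C(k, d) · g = 0` forces
`g = 0`.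
-/

namespace Nat

theorem not_prime_dvd_choose_of_le_mod {p n k : ℕ} (hp : p.Prime) (hk : k ≤ n % p) :
    ¬ p ∣ n.choose k := by
  have := Fact.mk hp
  have hkp : k < p := hk.trans_lt (n.mod_lt hp.pos)
  have hlucas : n.choose k ≡ (n % p).choose k [MOD p] := by
    simpa [Nat.div_eq_of_lt hkp, Nat.mod_eq_of_lt hkp] using
      Choose.choose_modEq_choose_mod_mul_choose_div_nat (n := n) (k := k) (p := p)
  rw [hlucas.dvd_iff dvd_rfl]
  intro hdvd
  have : p ∣ (n % p)! :=
    hdvd.trans ⟨_, ((n % p).choose_mul_factorial_mul_factorial hk).symm.trans (mul_assoc _ _ _)⟩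
  exact absurd ((hp.dvd_factorial).mp this) (not_le.mpr (n.mod_lt hp.pos))

theorem choose_modEq_choose_div_pow_of_modEq {p n k L : ℕ} [Fact p.Prime]
    (h : n ≡ k [MOD p ^ L]) : n.choose k ≡ (n / p ^ L).choose (k / p ^ L) [MOD p] := by
  have hdigit : ∀ i < L, n / p ^ i % p = k / p ^ i % p := fun i hi => by
    rw [← Nat.mod_mul_right_div_self, ← Nat.mod_mul_right_div_self, ← pow_succ,
      ← Nat.mod_mod_of_dvd n (pow_dvd_pow p hi), ← Nat.mod_mod_of_dvd k (pow_dvd_pow p hi), h]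
  have hlucas := Choose.choose_modEq_choose_mul_prod_range_choose (n := n) (k := k) (p := p) L
  rw [prod_congr rfl fun i hi => by rw [hdigit i (mem_range.mp hi), choose_self],
    prod_const_one, Nat.cast_one, mul_one] at hlucas
  exact Int.natCast_modEq_iff.mp hlucas

theorem le_add_mod_of_le_of_le_add_mod {p t y c : ℕ} (hty : t ≤ y) (hy : y ≤ (y + c) % p) :
    t ≤ (t + c) % p := by
  rcases p.eq_zero_or_pos with rfl | hp
  · simp
  rw [← Nat.add_mod_mod] at hy ⊢
  have hc := c.mod_lt hp
  have hyp : y < p := hy.trans_lt (Nat.mod_lt _ hp)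
  by_cases hcarry : y + c % p < p
  · rw [Nat.mod_eq_of_lt (by omega : t + c % p < p)]
    omega
  · rw [Nat.mod_eq_sub_mod (by omega), Nat.mod_eq_of_lt (by omega)] at hy
    omega

end Nat

theorem IsGoodSlice.not_prime_dvd_choose {p d k s : ℕ} (hp : p.Prime) (hg : IsGoodSlice p d k)
    (hs : s ≤ d) : ¬ p ∣ (k - s).choose (d - s) := by
  obtain ⟨hdk, hmod, hlead⟩ := hg
  set P := p ^ Nat.log p d
  have := Fact.mk hp
  have hP : 0 < P := pow_pos hp.pos _
  have hlead_lt : d / P < p :=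
    Nat.div_lt_of_lt_mul (by rw [← pow_succ]; exact Nat.lt_pow_succ_log_self hp.one_lt d)
  obtain ⟨c, hc⟩ : P ∣ k - d := (Nat.modEq_iff_dvd' hdk).mp hmod.symm
  have hshift : k - s ≡ d - s [MOD P] := Nat.ModEq.add_right_cancel' s <| by
    rwa [Nat.sub_add_cancel (hs.trans hdk), Nat.sub_add_cancel hs]
  rw [(Nat.choose_modEq_choose_div_pow_of_modEq hshift).dvd_iff dvd_rfl,
    show k - s = d - s + P * c by omega, Nat.add_mul_div_left _ _ hP]
  rw [show k = d + P * c by omega, Nat.add_mul_div_left _ _ hP, Nat.mod_eq_of_lt hlead_lt] at hlead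
  exact Nat.not_prime_dvd_choose_of_le_mod hp
    (Nat.le_add_mod_of_le_of_le_add_mod (Nat.div_le_div_right (Nat.sub_le d s)) hlead)

namespace Finset

variable {α M : Type*} [DecidableEq α]

theorem sum_powersetCard_succ_insert [AddCommMonoid M] {x : α} {s : Finset α} (hx : x ∉ s)
    (d : ℕ) (g : Finset α → M) :
    ∑ T ∈ powersetCard (d + 1) (insert x s), g T
      = ∑ T ∈ powersetCard (d + 1) s, g T + ∑ T ∈ powersetCard d s, g (insert x T) := by
  have hxT : ∀ T ∈ powersetCard d s, x ∉ T := fun T hT hxT => hx ((mem_powersetCard.mp hT).1 hxT)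
  rw [powersetCard_succ_insert hx, sum_union, sum_image]
  · exact fun T₁ h₁ T₂ h₂ h => by
      rw [← erase_insert (hxT T₁ h₁), ← erase_insert (hxT T₂ h₂), h]
  · refine disjoint_left.mpr fun T hT hT' => ?_
    obtain ⟨T', hT', rfl⟩ := mem_image.mp hT'
    exact hx ((mem_powersetCard.mp hT).1 (mem_insert_self x T'))

theorem sum_powersetCard_sum_powerset [AddCommMonoid M] (d : ℕ) (A : Finset α)
    (F : Finset α → M) :
    ∑ T ∈ powersetCard d A, ∑ S ∈ T.powerset, F S
      = ∑ S ∈ A.powerset with #S ≤ d, (#A - #S).choose (d - #S) • F S := by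
  rw [sum_comm' (t' := A.powerset.filter (#· ≤ d))
    (s' := fun S => (powersetCard d A).filter (S ⊆ ·))]
  · refine sum_congr rfl fun S hS => ?_
    rw [mem_filter, mem_powerset] at hS
    rw [sum_const, card_filter_powersetCard_subset S A d hS.1 hS.2]
  · intro T S
    simp only [mem_powersetCard, mem_powerset, mem_filter]
    constructor
    · rintro ⟨⟨hTA, rfl⟩, hST⟩
      exact ⟨⟨⟨hTA, rfl⟩, hST⟩, hST.trans hTA, card_le_card hST⟩
    · rintro ⟨⟨⟨hTA, rfl⟩, hST⟩, -⟩
      exact ⟨⟨hTA, rfl⟩, hST⟩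

theorem sum_powersetCard_sum_powerset_inverse_choose_mul {R : Type*} [Ring R] {d k : ℕ}
    {A : Finset α} (hA : #A = k) (hunit : ∀ s ≤ d, IsUnit ((k - s).choose (d - s) : R))
    (a : Finset α → R) :
    ∑ T ∈ powersetCard d A, ∑ S ∈ T.powerset, Ring.inverse ((k - #S).choose (d - #S) : R) * a S
      = ∑ S ∈ A.powerset with #S ≤ d, a S := by
  rw [sum_powersetCard_sum_powerset, hA]
  refine sum_congr rfl fun S hS => ?_
  rw [nsmul_eq_mul, ← mul_assoc, Ring.mul_inverse_cancel _ (hunit _ (mem_filter.mp hS).2), one_mul]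

theorem eq_of_forall_insert_eq_insert (g : Finset α → M) {U : Finset α} {m : ℕ}
    (hswap : ∀ T ⊆ U, #T = m → ∀ i ∈ U, ∀ j ∈ U, i ∉ T → j ∉ T → g (insert i T) = g (insert j T))
    {T₁ T₂ : Finset α} (h₁ : T₁ ⊆ U) (h₂ : T₂ ⊆ U) (hc₁ : #T₁ = m + 1) (hc₂ : #T₂ = m + 1) :
    g T₁ = g T₂ := by
  induction hN : #(T₁ \ T₂) generalizing T₁ with
  | zero =>
    rw [eq_of_subset_of_card_le (sdiff_eq_empty_iff_subset.mp (card_eq_zero.mp hN)) (by omega)]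
  | succ N ih =>
    have hN' : #(T₂ \ T₁) = N + 1 := (card_sdiff_comm (hc₁.trans hc₂.symm)).symm.trans hN
    obtain ⟨i, hi⟩ := card_pos.mp (by omega : 0 < #(T₁ \ T₂))
    obtain ⟨j, hj⟩ := card_pos.mp (by omega : 0 < #(T₂ \ T₁))
    rw [mem_sdiff] at hi hj
    have hjT : j ∉ T₁.erase i := fun h => hj.2 (mem_of_mem_erase h)
    have hexchange : g T₁ = g (insert j (T₁.erase i)) := calc
      g T₁ = g (insert i (T₁.erase i)) := by rw [insert_erase hi.1]
      _ = _ := hswap _ ((erase_subset i T₁).trans h₁) (by rw [card_erase_of_mem hi.1, hc₁]; rfl)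
        i (h₁ hi.1) j (h₂ hj.1) (notMem_erase i T₁) hjT
    rw [hexchange]
    refine ih (insert_subset (h₂ hj.1) ((erase_subset i T₁).trans h₁)) ?_ ?_
    · rw [card_insert_of_notMem hjT, card_erase_of_mem hi.1, hc₁]; rfl
    · rw [insert_sdiff_of_mem _ hj.1, erase_sdiff_comm, card_erase_of_mem (mem_sdiff.mpr hi), hN]
      rfl

theorem sum_powersetCard_insert_sub_insert_eq_zero [AddCommGroup M] {g : Finset α → M}
    {U : Finset α} {k d : ℕ}
    (hg : ∀ A ⊆ U, #A = k → ∑ T ∈ powersetCard (d + 1) A, g T = 0) {i j : α}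
    (hi : i ∈ U) (hj : j ∈ U) {A : Finset α} (hA : A ⊆ (U.erase i).erase j) (hcard : #A + 1 = k) :
    ∑ T ∈ powersetCard d A, (g (insert i T) - g (insert j T)) = 0 := by
  have hsum : ∀ x ∈ U, x ∉ A →
      ∑ T ∈ powersetCard (d + 1) A, g T + ∑ T ∈ powersetCard d A, g (insert x T) = 0 :=
    fun x hx hxA => by
      rw [← sum_powersetCard_succ_insert hxA]
      exact hg _ (insert_subset hx (hA.trans ((erase_subset _ _).trans (erase_subset _ _))))
        (by rw [card_insert_of_notMem hxA, hcard])
  have hiA : i ∉ A := fun h => by simpa using hA h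
  have hjA : j ∉ A := fun h => by simpa using hA h
  rw [sum_sub_distrib, sub_eq_zero]
  exact add_left_cancel ((hsum i hi hiA).trans (hsum j hj hjA).symm)

theorem eq_zero_of_forall_sum_powersetCard_eq_zero {R : Type*} [Ring R] (d : ℕ)
    {U : Finset α} {k : ℕ} {g : Finset α → R} (hdk : d ≤ k) (hkU : k + d ≤ #U)
    (hunit : ∀ s ≤ d, IsUnit ((k - s).choose (d - s) : R))
    (hg : ∀ A ⊆ U, #A = k → ∑ T ∈ powersetCard d A, g T = 0)
    {T : Finset α} (hTU : T ⊆ U) (hT : #T = d) : g T = 0 := by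
  induction d generalizing U k g T with
  | zero =>
    obtain ⟨A, hAU, hA⟩ := exists_subset_card_eq (show k ≤ #U by omega)
    simpa [card_eq_zero.mp hT] using hg A hAU hA
  | succ d ih =>
    have hswap : ∀ T' ⊆ U, #T' = d → ∀ i ∈ U, ∀ j ∈ U, i ∉ T' → j ∉ T' →
        g (insert i T') = g (insert j T') := by
      intro T' hT'U hT' i hi j hj hiT' hjT'
      rcases eq_or_ne i j with rfl | hij
      · rfl
      have hU' : #((U.erase i).erase j) = #U - 2 := by
        rw [card_erase_of_mem (mem_erase.mpr ⟨hij.symm, hj⟩), card_erase_of_mem hi]; rfl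
      refine sub_eq_zero.mp (ih (U := (U.erase i).erase j) (k := k - 1)
        (g := fun T => g (insert i T) - g (insert j T)) (by omega) (by omega)
        (fun s hs => ?_) (fun A' hA'U hA' => ?_) ?_ hT')
      · simpa [Nat.sub_sub, add_comm 1 s] using hunit (s + 1) (by omega)
      · exact sum_powersetCard_insert_sub_insert_eq_zero hg hi hj hA'U (by omega)
      · exact fun x hx => mem_erase.mpr ⟨fun h => hjT' (h ▸ hx),
          mem_erase.mpr ⟨fun h => hiT' (h ▸ hx), hT'U hx⟩⟩
    obtain ⟨A, hAU, hA⟩ := exists_subset_card_eq (show k ≤ #U by omega)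
    have hconst : ∀ T' ∈ powersetCard (d + 1) A, g T' = g T := fun T' hT' =>
      eq_of_forall_insert_eq_insert g hswap ((mem_powersetCard.mp hT').1.trans hAU) hTU
        (mem_powersetCard.mp hT').2 hT
    have hsum := hg A hAU hA
    rw [sum_congr rfl hconst, sum_const, card_powersetCard, hA, nsmul_eq_mul] at hsum
    exact (hunit 0 (Nat.zero_le _)).mul_right_eq_zero.mp (by simpa using hsum)

theorem prod_ite_mem_smul [AddCommGroup M] (S A : Finset α) (x : M) :
    (∏ i ∈ S, if i ∈ A then (1 : ℤ) else 0) • x = if S ⊆ A then x else 0 := by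
  rw [prod_boole, ite_smul, one_smul, zero_smul]
  exact if_congr Iff.rfl rfl rfl

variable [Fintype α] [AddCommGroup M]

theorem sum_filter_card_le_prod_ite_mem_smul (d : ℕ) (A : Finset α) (a : Finset α → M) :
    ∑ S ∈ univ.filter (fun S : Finset α => #S ≤ d),
        (∏ i ∈ S, if i ∈ A then (1 : ℤ) else 0) • a S
      = ∑ S ∈ A.powerset with #S ≤ d, a S := by
  simp_rw [prod_ite_mem_smul, ← sum_filter, filter_filter]
  congr 1
  ext S
  simp [and_comm]

theorem sum_subtype_card_prod_ite_mem_smul (d : ℕ) (A : Finset α) (g : Finset α → M) :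
    ∑ T : {T : Finset α // #T = d}, (∏ i ∈ (T : Finset α), if i ∈ A then (1 : ℤ) else 0) • g T
      = ∑ T ∈ powersetCard d A, g T := by
  simp_rw [prod_ite_mem_smul]
  rw [← sum_subtype (univ.filter (#· = d)) (by simp) (fun T => if T ⊆ A then g T else 0),
    ← sum_filter, filter_filter]
  congr 1
  ext T
  simp [and_comm]

end Finset

theorem homogeneous_basis_good_slice
    (p l n k d : ℕ) (hp : p.Prime)
    (hdk : d ≤ k) (hkn : k ≤ n - d) (hgood : IsGoodSlice p d k)
    (f : Finset (Fin n) → ZMod (p ^ l))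
    (hf : ∃ a : Finset (Fin n) → ZMod (p ^ l), ∀ A : Finset (Fin n), A.card = k →
      f A = ∑ S ∈ Finset.univ.filter (fun S : Finset (Fin n) => S.card ≤ d),
        (∏ i ∈ S, if i ∈ A then (1 : ℤ) else 0) • a S) :
    ∃! b : {T : Finset (Fin n) // T.card = d} → ZMod (p ^ l),
      ∀ A : Finset (Fin n), A.card = k →
        f A = ∑ T : {T : Finset (Fin n) // T.card = d},
          (∏ i ∈ (T : Finset (Fin n)), if i ∈ A then (1 : ℤ) else 0) • b T := by
  obtain ⟨a, ha⟩ := hf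
  have hunit : ∀ s ≤ d, IsUnit ((k - s).choose (d - s) : ZMod (p ^ l)) := fun s hs =>
    (ZMod.isUnit_iff_coprime _ _).mpr
      ((hp.coprime_iff_not_dvd.mpr (hgood.not_prime_dvd_choose hp hs)).symm.pow_right l)
  set B : Finset (Fin n) → ZMod (p ^ l) := fun T =>
    ∑ S ∈ T.powerset, Ring.inverse ((k - #S).choose (d - #S) : ZMod (p ^ l)) * a S
  have hB : ∀ A : Finset (Fin n), #A = k → f A = ∑ T : {T : Finset (Fin n) // #T = d},
      (∏ i ∈ (T : Finset (Fin n)), if i ∈ A then (1 : ℤ) else 0) • B T := fun A hA => by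
    rw [ha A hA, sum_filter_card_le_prod_ite_mem_smul, sum_subtype_card_prod_ite_mem_smul,
      sum_powersetCard_sum_powerset_inverse_choose_mul hA hunit]
  refine ⟨fun T => B T, hB, fun b hb => funext fun T => sub_eq_zero.mp ?_⟩
  set g := Function.extend Subtype.val (fun T => b T - B T) 0
  have hg (T : {T : Finset (Fin n) // #T = d}) : g T = b T - B T :=
    Subtype.val_injective.extend_apply _ _ T
  rw [← hg]
  refine eq_zero_of_forall_sum_powersetCard_eq_zero d hdk
    (by rw [card_univ, Fintype.card_fin]; omega) hunit (fun A _ hA => ?_) (subset_univ _) T.2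
  simp_rw [← sum_subtype_card_prod_ite_mem_smul, hg, smul_sub, sum_sub_distrib, ← hb A hA,
    ← hB A hA, sub_self]
end

section
/- Let p be a prime, q = p^ℓ a power of p, and let n, k, d be natural numbers with d ≤ k ≤ n − d such that k is (d,p)-good. Then every degree-d polynomial function f : {0,1}^n_k → Z_q lies in the Z_q-span of the homogeneous degree-d multilinear monomials: there exist coefficients b_T ∈ Z_q, one for each T ⊆ {1,…,n} with |T| = d, such that f(x) = Σ_{|T| = d} b_T · ∏_{i∈T} x_i for all x ∈ {0,1}^n_k. -/
/-!
STATEMENT 12: For (d,p)-good slices, the homogeneous degree-d multilinear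
monomials span: every degree-d polynomial function on the slice {0,1}^n_k
with values in Z_q (q = p^ℓ) is a Z_q-linear combination of monomials
∏_{i∈T} x_i with |T| = d.
Points of the slice are encoded as `A : Finset (Fin n)` with `A.card = k`.
Writing d = Σ b_j p^j and k = Σ a_j p^j in base p, with ℓ' = Nat.log p d the
index of the leading digit of d, k is (d,p)-good iff k ≥ d, a_j = b_j for
j < ℓ' (equivalently k ≡ d mod p^ℓ') and a_{ℓ'} ≥ b_{ℓ'}.
-/

open Finset

/-!
By Kummer's theorem, `(d,p)`-goodness of `k` makes every binomial coefficient
`C(k - e, d - e)` with `e ≤ d` prime to `p`, hence a unit in `ℤ/p^ℓ`: the base-`p` digits of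
`k - d` vanish below the leading position of `d`, and at that position they do not carry.
On a point `A` of the slice, a set `S ⊆ A` with `|S| = e ≤ d` lies in exactly `C(k - e, d - e)`
sets `T ⊆ A` with `|T| = d`, so there `x^S = C(k - e, d - e)⁻¹ • ∑_{S ⊆ T, |T| = d} x^T`.
-/

namespace Nat

theorem mod_le_mod_add_sub_of_dvd {m n : ℕ} (hmn : m ∣ n) (hn : 0 < n) (t : ℕ) :
    t % n ≤ t % m + (n - m) := by
  obtain ⟨c, rfl⟩ := hmn
  have hc : t / m % c ≤ c - 1 := Nat.le_sub_one_of_lt (Nat.mod_lt _ (Nat.pos_of_mul_pos_left hn))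
  calc t % (m * c) = t % m + m * (t / m % c) := Nat.mod_mul
    _ ≤ t % m + m * (c - 1) := by gcongr
    _ = t % m + (m * c - m) := by rw [Nat.mul_sub_one]

theorem mod_pow_add_mod_pow_lt {p L r t : ℕ} (hp : 0 < p) (ht : p ^ L ∣ t)
    (hrt : r + t % p ^ (L + 1) < p ^ (L + 1)) (i : ℕ) :
    r % p ^ i + t % p ^ i < p ^ i := by
  rcases le_or_gt i L with hiL | hLi
  · rw [Nat.mod_eq_zero_of_dvd ((pow_dvd_pow p hiL).trans ht), add_zero]
    exact Nat.mod_lt r (pow_pos hp i)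
  · replace hLi : L + 1 ≤ i := hLi
    have hle : p ^ (L + 1) ≤ p ^ i := Nat.pow_le_pow_right hp hLi
    rw [Nat.mod_eq_of_lt ((Nat.lt_of_add_right_lt hrt).trans_le hle)]
    have := mod_le_mod_add_sub_of_dvd (pow_dvd_pow p hLi) (pow_pos hp i) t
    omega

theorem Prime.not_dvd_choose_add {p r t : ℕ} (hp : p.Prime)
    (hcarry : ∀ i, r % p ^ i + t % p ^ i < p ^ i) : ¬ p ∣ (t + r).choose r := by
  have hmult := hp.emultiplicity_choose' (n := t) (k := r) (Nat.lt_succ_self _)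
  rw [filter_false_of_mem fun i _ => not_le.2 (hcarry i), card_empty, Nat.cast_zero] at hmult
  exact emultiplicity_eq_zero.1 hmult

end Nat

theorem IsGoodSlice.pow_log_dvd_sub {p d k : ℕ} (hgood : IsGoodSlice p d k) :
    p ^ Nat.log p d ∣ k - d :=
  Nat.dvd_of_mod_eq_zero (Nat.sub_mod_eq_zero_of_mod_eq hgood.2.1)

/-- The goodness condition on the leading digit says that the digit of `k - d` at position
`Nat.log p d` adds to the leading digit of `d` without carry. -/
theorem IsGoodSlice.add_sub_mod_pow_lt {p d k r : ℕ} (hp : p.Prime) (hgood : IsGoodSlice p d k)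
    (hr : r ≤ d) : r + (k - d) % p ^ (Nat.log p d + 1) < p ^ (Nat.log p d + 1) := by
  obtain ⟨m, hm⟩ := hgood.pow_log_dvd_sub
  obtain ⟨hdk, -, hlead⟩ := hgood
  set L := Nat.log p d
  have hL : 0 < p ^ L := pow_pos hp.pos L
  have hB : d / p ^ L < p := by
    rw [Nat.div_lt_iff_lt_mul hL, ← pow_succ']
    exact Nat.lt_pow_succ_log_self hp.one_lt d
  have hkdiv : k / p ^ L = d / p ^ L + m := by
    rw [show k = d + p ^ L * m by omega, Nat.add_mul_div_left _ _ hL]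
  have hdigit : d / p ^ L + m % p < p := by
    rw [hkdiv, Nat.add_mod, Nat.mod_eq_of_lt hB] at hlead
    have := Nat.mod_lt m hp.pos
    by_contra h
    rw [Nat.mod_eq_sub_mod (not_lt.1 h), Nat.mod_eq_of_lt (by omega)] at hlead
    omega
  rw [hm, pow_succ, Nat.mul_mod_mul_left]
  calc r + p ^ L * (m % p) ≤ d + p ^ L * (m % p) := by omega
    _ < p ^ L * (d / p ^ L + 1) + p ^ L * (m % p) := by
      have := Nat.lt_mul_div_succ d hL
      omega
    _ ≤ p ^ L * p := by
      rw [← mul_add]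
      exact Nat.mul_le_mul_left _ (by omega)

theorem IsGoodSlice.not_dvd_choose {p d k e : ℕ} (hp : p.Prime) (hgood : IsGoodSlice p d k)
    (he : e ≤ d) : ¬ p ∣ (k - e).choose (d - e) := by
  rw [show k - e = (k - d) + (d - e) by have := hgood.1; omega]
  exact hp.not_dvd_choose_add <| Nat.mod_pow_add_mod_pow_lt hp.pos hgood.pow_log_dvd_sub
    (hgood.add_sub_mod_pow_lt hp (Nat.sub_le d e))

section

variable {ι : Type*} [DecidableEq ι]

theorem exists_sum_powersetCard_eq_sum_powerset {R : Type*} [Semiring R] {k d : ℕ}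
    (hunit : ∀ e ≤ d, IsUnit ((k - e).choose (d - e) : R)) (a : Finset ι → R) :
    ∃ b : Finset ι → R, ∀ A : Finset ι, #A = k →
      ∑ S ∈ A.powerset with #S ≤ d, a S = ∑ T ∈ A.powersetCard d, b T := by
  refine ⟨fun T => ∑ S ∈ T.powerset, Ring.inverse ((k - #S).choose (d - #S) : R) * a S, ?_⟩
  intro A hA
  rw [sum_comm' (t' := A.powerset.filter (#· ≤ d))
    (s' := fun S => (A.powersetCard d).filter (S ⊆ ·))]
  · refine sum_congr rfl fun S hS => ?_
    obtain ⟨hSA, hSd⟩ := mem_filter.1 hS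
    rw [sum_const, card_filter_powersetCard_subset S A d (mem_powerset.1 hSA) hSd, hA,
      nsmul_eq_mul, ← mul_assoc, Ring.mul_inverse_cancel _ (hunit _ hSd), one_mul]
  · intro T S
    simp only [mem_powersetCard, mem_powerset, mem_filter]
    refine ⟨fun h => ⟨h, h.2.trans h.1.1, ?_⟩, And.left⟩
    exact h.1.2 ▸ card_le_card h.2

theorem sum_filter_zsmul_prod_indicator {M : Type*} [AddCommGroup M] [Fintype ι]
    (P : Finset ι → Prop) [DecidablePred P] (A : Finset ι) (g : Finset ι → M) :
    ∑ S ∈ univ.filter P, (∏ i ∈ S, if i ∈ A then (1 : ℤ) else 0) • g S =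
      ∑ S ∈ A.powerset.filter P, g S := by
  simp only [prod_boole, ite_smul, one_smul, zero_smul]
  rw [← sum_filter, filter_filter]
  exact sum_congr (by ext S; simp [and_comm, subset_iff]) fun _ _ => rfl

end

theorem homogeneous_spanning_good_slice_general
    (p l n k d : ℕ) (hp : p.Prime)
    (hgood : IsGoodSlice p d k)
    (f : Finset (Fin n) → ZMod (p ^ l))
    (hf : ∃ a : Finset (Fin n) → ZMod (p ^ l), ∀ A : Finset (Fin n), A.card = k →
      f A = ∑ S ∈ Finset.univ.filter (fun S : Finset (Fin n) => S.card ≤ d),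
        (∏ i ∈ S, if i ∈ A then (1 : ℤ) else 0) • a S) :
    ∃ b : {T : Finset (Fin n) // T.card = d} → ZMod (p ^ l),
      ∀ A : Finset (Fin n), A.card = k →
        f A = ∑ T : {T : Finset (Fin n) // T.card = d},
          (∏ i ∈ (T : Finset (Fin n)), if i ∈ A then (1 : ℤ) else 0) • b T := by
  obtain ⟨a, ha⟩ := hf
  have hunit : ∀ e ≤ d, IsUnit (((k - e).choose (d - e) : ℕ) : ZMod (p ^ l)) := fun e he =>
    (ZMod.isUnit_iff_coprime _ _).2 <|
      (hp.coprime_iff_not_dvd.2 (hgood.not_dvd_choose hp he)).symm.pow_right l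
  obtain ⟨b, hb⟩ := exists_sum_powersetCard_eq_sum_powerset hunit a
  refine ⟨fun T => b T, fun A hA => ?_⟩
  rw [ha A hA, sum_filter_zsmul_prod_indicator, hb A hA, powersetCard_eq_filter,
    ← sum_filter_zsmul_prod_indicator (fun T : Finset (Fin n) => #T = d)]
  exact sum_subtype _ (by simp) _

theorem homogeneous_spanning_good_slice
    (p l n k d : ℕ) (hp : p.Prime)
    (hdk : d ≤ k) (hkn : k ≤ n - d) (hgood : IsGoodSlice p d k)
    (f : Finset (Fin n) → ZMod (p ^ l))
    (hf : ∃ a : Finset (Fin n) → ZMod (p ^ l), ∀ A : Finset (Fin n), A.card = k →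
      f A = ∑ S ∈ Finset.univ.filter (fun S : Finset (Fin n) => S.card ≤ d),
        (∏ i ∈ S, if i ∈ A then (1 : ℤ) else 0) • a S) :
    ∃ b : {T : Finset (Fin n) // T.card = d} → ZMod (p ^ l),
      ∀ A : Finset (Fin n), A.card = k →
        f A = ∑ T : {T : Finset (Fin n) // T.card = d},
          (∏ i ∈ (T : Finset (Fin n)), if i ∈ A then (1 : ℤ) else 0) • b T :=
  homogeneous_spanning_good_slice_general p l n k d hp hgood f hf
end

section
/- There exists N such that for every integer n ≥ N and arbitrary integers k with n^{1/4} ≤ k ≤ n/2 and d with 1 ≤ d ≤ k^{0.1}, setting ℓ = ⌊n/√k⌋, the binomial coefficients satisfy C(n−ℓ, k) < C(n−2d, k−d). -/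
/-!
Put m = n - ℓ, r = k - d and t = ℓ - 2d, so that the claim reads C(m, r + d) < C(m + t, r).
Raising the lower index from r to r + d multiplies a binomial coefficient by at most (m/r)^d,
while raising the upper index from m to m + t multiplies it by at least (1 + r/(m + t))^t.
With w = k^{1/10} we have √k = w^5 and n ≤ w^40, so the loss is at most
exp(d log m) ≤ exp(40 w²), while the gain is at least exp(t r/(m + t + r)) ≥ exp(w^5/8),
since t ≈ n/w^5 and r ≈ w^10.
-/

open Real

namespace Nat

theorem choose_add_mul_pow_le (m r d : ℕ) : m.choose (r + d) * r ^ d ≤ m.choose r * m ^ d := by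
  induction d with
  | zero => simp
  | succ d ih =>
    calc m.choose (r + d + 1) * r ^ (d + 1)
        ≤ m.choose (r + d + 1) * (r + d + 1) * r ^ d := by
          rw [pow_succ, mul_comm _ r, ← mul_assoc]; gcongr; omega
      _ = m.choose (r + d) * (m - (r + d)) * r ^ d := by rw [choose_succ_right_eq]
      _ ≤ m.choose (r + d) * m * r ^ d := by gcongr; omega
      _ = m.choose (r + d) * r ^ d * m := by ring
      _ ≤ m.choose r * m ^ (d + 1) := by rw [pow_succ, ← mul_assoc]; gcongr

theorem choose_mul_add_le_succ_choose_mul {m N : ℕ} (r : ℕ) (h : m + 1 ≤ N) :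
    m.choose r * (N + r) ≤ (m + 1).choose r * N := by
  rcases lt_or_ge m r with hmr | hrm
  · simp [choose_eq_zero_of_lt hmr]
  obtain ⟨s, hs⟩ : ∃ s, m + 1 = r + s := ⟨m + 1 - r, by omega⟩
  have hs0 : 0 < s := by omega
  refine le_of_mul_le_mul_right ?_ hs0
  have hpascal : m.choose r * (r + s) = (m + 1).choose r * s := by
    rw [← hs, choose_mul_succ_eq, hs, Nat.add_sub_cancel_left]
  calc m.choose r * (N + r) * s = m.choose r * (N * s + r * s) := by ring
    _ ≤ m.choose r * (N * s + r * N) := by gcongr; omega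
    _ = m.choose r * (r + s) * N := by ring
    _ = (m + 1).choose r * N * s := by rw [hpascal]; ring

theorem choose_mul_add_pow_le_choose_mul_pow {m t N : ℕ} (r : ℕ) (h : m + t ≤ N) :
    m.choose r * (N + r) ^ t ≤ (m + t).choose r * N ^ t := by
  induction t with
  | zero => simp
  | succ t ih =>
    calc m.choose r * (N + r) ^ (t + 1) = m.choose r * (N + r) ^ t * (N + r) := by ring
      _ ≤ (m + t).choose r * N ^ t * (N + r) := Nat.mul_le_mul_right _ (ih (by omega))
      _ = (m + t).choose r * (N + r) * N ^ t := by ring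
      _ ≤ (m + t + 1).choose r * N * N ^ t :=
          Nat.mul_le_mul_right _ (choose_mul_add_le_succ_choose_mul r (by omega))
      _ = (m + (t + 1)).choose r * N ^ (t + 1) := by rw [← add_assoc, pow_succ]; ring

theorem choose_add_lt_choose_add_of_pow_lt {m r d t : ℕ} (hrm : r ≤ m)
    (h : m ^ d * (m + t) ^ t < r ^ d * (m + t + r) ^ t) :
    m.choose (r + d) < (m + t).choose r := by
  refine Nat.lt_of_mul_lt_mul_right (a := r ^ d * (m + t) ^ t) ?_
  calc m.choose (r + d) * (r ^ d * (m + t) ^ t)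
      = m.choose (r + d) * r ^ d * (m + t) ^ t := by ring
    _ ≤ m.choose r * m ^ d * (m + t) ^ t :=
        Nat.mul_le_mul_right _ (choose_add_mul_pow_le m r d)
    _ = m.choose r * (m ^ d * (m + t) ^ t) := by ring
    _ < m.choose r * (r ^ d * (m + t + r) ^ t) := by gcongr; exact choose_pos hrm
    _ = m.choose r * (m + t + r) ^ t * r ^ d := by ring
    _ ≤ (m + t).choose r * (m + t) ^ t * r ^ d :=
        Nat.mul_le_mul_right _ (choose_mul_add_pow_le_choose_mul_pow r le_rfl)
    _ = (m + t).choose r * (r ^ d * (m + t) ^ t) := by ring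

end Nat

theorem pow_mul_pow_lt_of_mul_log_lt {m r N : ℝ} {d t : ℕ} (hm : 0 < m) (hr : 1 ≤ r)
    (hN : 0 < N) (h : d * log m < t * (r / (N + r))) : m ^ d * N ^ t < r ^ d * (N + r) ^ t := by
  have hr0 : 0 < r := by linarith
  have hNr : 0 < N + r := by linarith
  rw [← log_lt_log_iff (by positivity) (by positivity), log_mul (by positivity) (by positivity),
    log_mul (by positivity) (by positivity), log_pow, log_pow, log_pow, log_pow]
  have hgap : r / (N + r) ≤ log (N + r) - log N := by
    have := one_sub_inv_le_log_of_pos (div_pos hNr hN)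
    rwa [inv_div, one_sub_div hNr.ne', add_sub_cancel_left, log_div hNr.ne' hN.ne'] at this
  have := mul_le_mul_of_nonneg_left hgap (Nat.cast_nonneg t)
  have := mul_nonneg (Nat.cast_nonneg d) (log_nonneg hr)
  linarith

theorem Nat.choose_add_lt_choose_add_of_mul_log_lt {m r d t : ℕ} (hr : 0 < r) (hrm : r ≤ m)
    (h : (d : ℝ) * Real.log m < t * (r / (m + t + r))) : m.choose (r + d) < (m + t).choose r := by
  refine Nat.choose_add_lt_choose_add_of_pow_lt hrm ?_
  have hm : (0 : ℝ) < m := by exact_mod_cast hr.trans_le hrm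
  have hr1 : (1 : ℝ) ≤ r := by exact_mod_cast hr
  exact_mod_cast pow_mul_pow_lt_of_mul_log_lt hm hr1 (by positivity) h

theorem mul_log_lt_mul_div {w x M T R D d : ℝ} (hw : 7 ≤ w) (hd : 0 ≤ d) (hdw : d ≤ w)
    (hM : 0 < M) (hMx : M ≤ x) (hxw : x ≤ w ^ 40) (hT : x / (2 * w ^ 5) ≤ T)
    (hR : w ^ 10 / 2 ≤ R) (hD : 0 < D) (hDx : D ≤ 2 * x) : d * log M < T * (R / D) := by
  have hx : 0 < x := hM.trans_le hMx
  have hlog : log M ≤ 40 * w := by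
    calc log M ≤ log (w ^ 40) := log_le_log hM (hMx.trans hxw)
      _ = 40 * log w := by rw [log_pow]; norm_num
      _ ≤ 40 * w := by linarith [log_le_sub_one_of_pos (by linarith : 0 < w)]
  calc d * log M ≤ w * (40 * w) :=
        (mul_le_mul_of_nonneg_left hlog hd).trans (mul_le_mul_of_nonneg_right hdw (by linarith))
    _ < w ^ 5 / 8 := by nlinarith [pow_le_pow_left₀ (by norm_num) hw 3]
    _ = x / (2 * w ^ 5) * (w ^ 10 / 2 / (2 * x)) := by field_simp; ring
    _ ≤ T * (R / D) := by
        have : 0 ≤ x / (2 * w ^ 5) := by positivity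
        have : 0 ≤ w ^ 10 / 2 := by positivity
        gcongr <;> linarith

theorem le_floor_div_pow_five {w : ℝ} {n d : ℕ} (hw : 2 ≤ w) (hn : 2 * w ^ 10 ≤ n)
    (hd : (d : ℝ) ≤ w) : (n : ℝ) / (2 * w ^ 5) + 2 * d ≤ ⌊(n : ℝ) / w ^ 5⌋₊ := by
  have hfloor := Nat.lt_floor_add_one ((n : ℝ) / w ^ 5)
  have hw5 : 0 < w ^ 5 := by positivity
  have hhalf : (n : ℝ) / w ^ 5 = n / (2 * w ^ 5) + n / (2 * w ^ 5) := by field_simp; ring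
  have hlarge : w ^ 5 ≤ (n : ℝ) / (2 * w ^ 5) := by
    rw [le_div_iff₀ (by positivity)]; linarith
  nlinarith [pow_le_pow_left₀ (by norm_num) hw 4]

theorem floor_div_pow_five_add_le {w : ℝ} {n k : ℕ} (hw : 2 ≤ w) (hk : 2 * k ≤ n) :
    ⌊(n : ℝ) / w ^ 5⌋₊ + k ≤ n := by
  have hfloor := Nat.floor_le (by positivity : 0 ≤ (n : ℝ) / w ^ 5)
  have hhalf : (n : ℝ) / w ^ 5 ≤ n / 2 :=
    div_le_div_of_nonneg_left (Nat.cast_nonneg n) two_pos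
      (by nlinarith [pow_le_pow_left₀ (by norm_num) hw 5])
  have hk' : (2 * k : ℝ) ≤ n := by exact_mod_cast hk
  exact_mod_cast (by linarith : (⌊(n : ℝ) / w ^ 5⌋₊ + k : ℝ) ≤ n)

theorem le_rpow_tenth_pow_forty {x y : ℝ} (hx : 0 ≤ x) (hy : 0 ≤ y)
    (h : x ^ ((1 : ℝ) / 4) ≤ y) : x ≤ (y ^ (0.1 : ℝ)) ^ 40 := by
  rw [one_div, rpow_inv_le_iff_of_pos hx hy four_pos] at h
  rw [← rpow_natCast, ← rpow_mul hy]
  norm_num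
  exact_mod_cast h

theorem binomial_count_inequality :
    ∃ N : ℕ, ∀ n k d : ℕ, N ≤ n →
      (n : ℝ) ^ ((1 : ℝ) / 4) ≤ (k : ℝ) → 2 * k ≤ n →
      1 ≤ d → (d : ℝ) ≤ (k : ℝ) ^ ((0.1 : ℝ)) →
      (n - ⌊(n : ℝ) / Real.sqrt k⌋₊).choose k < (n - 2 * d).choose (k - d) := by
  refine ⟨10 ^ 40, fun n k d hn hnk hkn _ hdk => ?_⟩
  set w := (k : ℝ) ^ (0.1 : ℝ)
  have hkw : (k : ℝ) = w ^ 10 := by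
    rw [← rpow_natCast, ← rpow_mul (Nat.cast_nonneg k)]; norm_num
  have hnw : (n : ℝ) ≤ w ^ 40 :=
    le_rpow_tenth_pow_forty (Nat.cast_nonneg n) (Nat.cast_nonneg k) hnk
  have hw : 10 ≤ w :=
    le_of_pow_le_pow_left₀ (by norm_num : 40 ≠ 0) (by positivity)
      (le_trans (by exact_mod_cast hn) hnw)
  have hw10 : 2 * w ≤ w ^ 10 := by nlinarith [pow_le_pow_left₀ (by norm_num) hw 9]
  have hkn' : (2 * k : ℝ) ≤ n := by exact_mod_cast hkn
  rw [show √(k : ℝ) = w ^ 5 by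
    rw [hkw, show w ^ 10 = (w ^ 5) ^ 2 by ring, sqrt_sq (by positivity)]]
  set ℓ := ⌊(n : ℝ) / w ^ 5⌋₊
  have hℓ : (n : ℝ) / (2 * w ^ 5) + 2 * d ≤ ℓ :=
    le_floor_div_pow_five (by linarith) (by linarith) hdk
  have h2d : 2 * d ≤ ℓ := by exact_mod_cast (le_add_of_nonneg_left (by positivity)).trans hℓ
  have hℓk : ℓ + k ≤ n := floor_div_pow_five_add_le (by linarith) hkn
  have hdk' : d < k := by exact_mod_cast (by linarith : (d : ℝ) < k)
  have hchoose := Nat.choose_add_lt_choose_add_of_mul_log_lt (m := n - ℓ) (r := k - d) (d := d)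
    (t := ℓ - 2 * d) (by omega) (by omega) ?_
  · rwa [Nat.sub_add_cancel hdk'.le, show n - ℓ + (ℓ - 2 * d) = n - 2 * d by omega] at hchoose
  have hℓk' : (ℓ + k : ℝ) ≤ n := by exact_mod_cast hℓk
  push_cast [Nat.cast_sub (by omega : ℓ ≤ n), Nat.cast_sub h2d, Nat.cast_sub hdk'.le]
  refine mul_log_lt_mul_div (by linarith) (Nat.cast_nonneg d) hdk (x := n) ?_ ?_ hnw ?_ ?_ ?_ ?_ <;>
    linarith
end
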